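/- arXiv:2511.21147 — 7 statements merged into one kernel-verified Lean document; each statement's English description precedes it below -/
import Mathlib

section
/- The member state choice rule Ĉ_m satisfies early filling: for any set of contracts X', if a contract x = (a, m, w) is accepted and another contract x' = (a, m, w') with w' < w is in X' but not accepted, then the number of accepted asylum seekers at wait time w' with priority higher than a equals the capacity r^{w'}_m (i.e., a does not qualify for the lower wait time). -/
/-- A contract at a fixed member state: `(asylum seeker, wait time)`.
Asylum seekers are labelled by naturals; `π a` is the priority rank of `a`
(smaller rank = higher priority); wait times are naturals. -/
abbrev Ctr := ℕ × ℕ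

open Classical in
/-- Pick, from a nonempty set of contracts, the lowest-wait-time contract of the
highest-priority asylum seeker (lexicographic minimum of (rank, wait, agent)). -/
noncomputable def pick (π : ℕ → ℕ) (Z : Finset Ctr) (h : Z.Nonempty) : Ctr :=
  let k := (Z.image fun x => toLex ((π x.1 : ℕ), toLex (x.2, x.1))).min'
    (h.image _)
  ((ofLex (ofLex k).2).2, (ofLex (ofLex k).2).1)

open Classical in
/-- One run of the greedy algorithm with fuel.  `excl = true` excludes all
contracts of already accepted asylum seekers (the rule `Ĉ_m`), `excl = false`
excludes only already accepted contracts (the completion `Ĉ'_m`). -/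
noncomputable def run (s : ℕ → ℕ) (q : ℕ) (r π : ℕ → ℕ) (excl : Bool)
    (X' : Finset Ctr) : ℕ → Finset Ctr → Finset Ctr
  | 0, acc => acc
  | n+1, acc =>
    let Z : Finset Ctr := X'.filter fun x =>
      (acc.filter fun y => y.2 = x.2).card < r x.2 ∧
      (excl = true → ∀ y ∈ acc, y.1 ≠ x.1) ∧
      (excl = false → x ∉ acc)
    if q ≤ acc.sum (fun x => s x.1) then acc
    else if h : Z.Nonempty then
      run s q r π excl X' n (insert (pick π Z h) acc)
    else acc

/-- The member state choice rule `Ĉ_m`. -/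
noncomputable def Chat (s : ℕ → ℕ) (q : ℕ) (r π : ℕ → ℕ)
    (X' : Finset Ctr) : Finset Ctr :=
  run s q r π true X' (X'.card + 1) ∅

/-- The completion `Ĉ'_m` of the member state choice rule. -/
noncomputable def Chat' (s : ℕ → ℕ) (q : ℕ) (r π : ℕ → ℕ)
    (X' : Finset Ctr) : Finset Ctr :=
  run s q r π false X' (X'.card + 1) ∅

/-!
Along the greedy run, every accepted contract precedes, in the order used by `pick` (priority,
then wait time), every contract that is still available. When `x` is picked, the contract `x'`
of the same asylum seeker with a lower wait time precedes `x`, so it is unavailable: its wait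
time is already at capacity. Everything accepted at that moment precedes `x` and belongs to
another asylum seeker, hence has higher priority. As capacities are never exceeded, these are
exactly the higher-priority contracts accepted at wait time `x'.2`.
-/

def key (π : ℕ → ℕ) (x : Ctr) : Lex (ℕ × Lex (ℕ × ℕ)) :=
  toLex (π x.1, toLex (x.2, x.1))

theorem pick_mem_and_key_le (π : ℕ → ℕ) (Z : Finset Ctr) (h : Z.Nonempty) :
    pick π Z h ∈ Z ∧ ∀ z ∈ Z, key π (pick π Z h) ≤ key π z := by
  obtain ⟨x₀, hx₀, hkey⟩ := Finset.mem_image.mp (Finset.min'_mem _ (h.image (key π)))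
  have hpick : pick π Z h = x₀ :=
    calc pick π Z h = ((ofLex (ofLex (key π x₀)).2).2, (ofLex (ofLex (key π x₀)).2).1) := by
          rw [hkey]; rfl
      _ = x₀ := rfl
  refine ⟨hpick ▸ hx₀, fun z hz => ?_⟩
  rw [hpick, hkey]
  exact Finset.min'_le _ _ (Finset.mem_image_of_mem _ hz)

theorem key_lt_of_wait_lt (π : ℕ → ℕ) {x x' : Ctr} (hagent : x'.1 = x.1) (hwait : x'.2 < x.2) :
    key π x' < key π x :=
  Prod.Lex.lt_iff.2 (Or.inr ⟨by simp [key, hagent], Prod.Lex.lt_iff.2 (Or.inl hwait)⟩)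

theorem priority_lt_of_key_le {π : ℕ → ℕ} (hπ : Function.Injective π) {y z : Ctr}
    (hle : key π y ≤ key π z) (hne : y.1 ≠ z.1) : π y.1 < π z.1 := by
  rcases Prod.Lex.le_iff.1 hle with hlt | ⟨heq, -⟩
  · exact hlt
  · exact absurd (hπ heq) hne

section Greedy

variable (s : ℕ → ℕ) (q : ℕ) (r π : ℕ → ℕ) (X' : Finset Ctr)

def waitCount (acc : Finset Ctr) (w : ℕ) : ℕ := (acc.filter fun y => y.2 = w).card

open Classical in
/-- The contracts `Ĉ_m` may still accept after accepting `acc`. -/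
noncomputable def available (acc : Finset Ctr) : Finset Ctr :=
  X'.filter fun x => waitCount acc x.2 < r x.2 ∧ ∀ y ∈ acc, y.1 ≠ x.1

def PrecedesAvailable (acc : Finset Ctr) : Prop :=
  ∀ y ∈ acc, ∀ z ∈ available r X' acc, key π y ≤ key π z

theorem run_true_succ (n : ℕ) (acc : Finset Ctr) :
    run s q r π true X' (n + 1) acc =
      if q ≤ acc.sum (fun x => s x.1) then acc
      else if h : (available r X' acc).Nonempty then
        run s q r π true X' n (insert (pick π (available r X' acc) h) acc)
      else acc := by
  have hZ : (X'.filter fun x => (acc.filter fun y => y.2 = x.2).card < r x.2 ∧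
      (true = true → ∀ y ∈ acc, y.1 ≠ x.1) ∧ (true = false → x ∉ acc)) = available r X' acc := by
    ext x
    simp only [available, Finset.mem_filter]
    simp [waitCount]
  rw [run, hZ]

theorem subset_run (excl : Bool) (n : ℕ) (acc : Finset Ctr) :
    acc ⊆ run s q r π excl X' n acc := by
  induction n generalizing acc with
  | zero => simp [run]
  | succ n ih =>
    rw [run]
    split_ifs
    · rfl
    · exact (Finset.subset_insert _ _).trans (ih _)
    · rfl

theorem mem_available {acc : Finset Ctr} {x : Ctr} :
    x ∈ available r X' acc ↔ x ∈ X' ∧ waitCount acc x.2 < r x.2 ∧ ∀ y ∈ acc, y.1 ≠ x.1 :=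
  Finset.mem_filter

theorem waitCount_mono {acc acc' : Finset Ctr} (h : acc ⊆ acc') (w : ℕ) :
    waitCount acc w ≤ waitCount acc' w :=
  Finset.card_le_card (Finset.filter_subset_filter _ h)

theorem available_anti {acc acc' : Finset Ctr} (h : acc ⊆ acc') :
    available r X' acc' ⊆ available r X' acc := by
  intro z hz
  rw [mem_available] at hz ⊢
  exact ⟨hz.1, (waitCount_mono h _).trans_lt hz.2.1, fun y hy => hz.2.2 y (h hy)⟩

theorem waitCount_insert_le {p : Ctr} {acc : Finset Ctr} (hp : waitCount acc p.2 < r p.2)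
    (hacc : ∀ w, waitCount acc w ≤ r w) (w : ℕ) : waitCount (insert p acc) w ≤ r w := by
  unfold waitCount
  rw [Finset.filter_insert]
  split_ifs with hw
  · subst hw
    exact (Finset.card_insert_le _ _).trans hp
  · exact hacc w

theorem run_waitCount_le (excl : Bool) (n : ℕ) (acc : Finset Ctr)
    (hacc : ∀ w, waitCount acc w ≤ r w) (w : ℕ) :
    waitCount (run s q r π excl X' n acc) w ≤ r w := by
  induction n generalizing acc with
  | zero => exact hacc w
  | succ n ih =>
    rw [run]
    split_ifs with _ hZ
    · exact hacc w
    · have hpick := (Finset.mem_filter.mp (pick_mem_and_key_le π _ hZ).1).2.1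
      exact ih _ (waitCount_insert_le r hpick hacc)
    · exact hacc w

theorem precedesAvailable_insert_pick {acc : Finset Ctr} (hacc : PrecedesAvailable r π X' acc)
    (h : (available r X' acc).Nonempty) :
    PrecedesAvailable r π X' (insert (pick π (available r X' acc) h) acc) := by
  intro y hy z hz
  have hz' := available_anti r X' (Finset.subset_insert _ _) hz
  rcases Finset.mem_insert.1 hy with rfl | hy
  · exact (pick_mem_and_key_le π _ h).2 z hz'
  · exact hacc y hy z hz'

theorem exists_state_of_mem_run (n : ℕ) {acc : Finset Ctr} (hacc : PrecedesAvailable r π X' acc)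
    {x : Ctr} (hx : x ∈ run s q r π true X' n acc) (hxacc : x ∉ acc) :
    ∃ B ⊆ run s q r π true X' n acc, PrecedesAvailable r π X' B ∧
      ∃ h : (available r X' B).Nonempty, x = pick π (available r X' B) h := by
  induction n generalizing acc with
  | zero => exact absurd hx hxacc
  | succ n ih =>
    rw [run_true_succ] at hx ⊢
    split_ifs at hx ⊢ with _ hZ
    · exact absurd hx hxacc
    · by_cases hxp : x = pick π (available r X' acc) hZ
      · exact ⟨acc, (Finset.subset_insert _ _).trans (subset_run s q r π X' true n _), hacc, hZ, hxp⟩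
      · refine ih (precedesAvailable_insert_pick r π X' hacc hZ) hx ?_
        rw [Finset.mem_insert, not_or]
        exact ⟨hxp, hxacc⟩
    · exact absurd hx hxacc

theorem le_waitCount_of_pick {B : Finset Ctr} (h : (available r X' B).Nonempty) {x' : Ctr}
    (hx' : x' ∈ X') (hagent : x'.1 = (pick π (available r X' B) h).1)
    (hwait : x'.2 < (pick π (available r X' B) h).2) : r x'.2 ≤ waitCount B x'.2 := by
  obtain ⟨hmem, hmin⟩ := pick_mem_and_key_le π _ h
  by_contra! hlt
  have hx'avail : x' ∈ available r X' B := by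
    rw [mem_available] at hmem ⊢
    exact ⟨hx', hlt, hagent ▸ hmem.2.2⟩
  exact not_lt_of_ge (hmin x' hx'avail) (key_lt_of_wait_lt π hagent hwait)

end Greedy

theorem chat_earlyFilling_general (s : ℕ → ℕ) (q : ℕ) (r π : ℕ → ℕ)
    (hπ : Function.Injective π) (X' : Finset Ctr) (x x' : Ctr)
    (hx : x ∈ Chat s q r π X') (hx' : x' ∈ X') (hagent : x'.1 = x.1)
    (hwait : x'.2 < x.2) :
    ((Chat s q r π X').filter fun y => y.2 = x'.2 ∧ π y.1 < π x.1).card = r x'.2 := by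
  have hempty : PrecedesAvailable r π X' ∅ := by simp [PrecedesAvailable]
  obtain ⟨B, hBsub, hB, hne, rfl⟩ :=
    exists_state_of_mem_run s q r π X' _ hempty hx (Finset.notMem_empty x)
  have hhigher : B.filter (fun y => y.2 = x'.2 ∧ π y.1 < π (pick π _ hne).1) =
      B.filter (fun y => y.2 = x'.2) := by
    refine Finset.filter_congr fun y hy => and_iff_left_of_imp fun _ => ?_
    obtain ⟨hmem, -⟩ := pick_mem_and_key_le π _ hne
    exact priority_lt_of_key_le hπ (hB y hy _ hmem) (((mem_available r X').1 hmem).2.2 y hy)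
  apply le_antisymm
  · calc _ ≤ waitCount (Chat s q r π X') x'.2 :=
          Finset.card_le_card (Finset.monotone_filter_right _ fun _ _ => And.left)
      _ ≤ r x'.2 := run_waitCount_le s q r π X' true _ ∅ (by simp [waitCount]) _
  · calc r x'.2 ≤ waitCount B x'.2 := le_waitCount_of_pick r π X' hne hx' hagent hwait
      _ = _ := by rw [waitCount, ← hhigher]
      _ ≤ _ := Finset.card_le_card (Finset.filter_subset_filter _ hBsub)

/-- early filling: if a contract of asylum seeker `a` is
accepted while a lower-wait-time contract of `a` in `X'` is not, then `a` does
not qualify for the lower wait time: the higher-priority accepted contracts at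
that wait time exactly fill the capacity. -/
theorem chat_earlyFilling (s : ℕ → ℕ) (q : ℕ) (r π : ℕ → ℕ)
    (hπ : Function.Injective π) (X' : Finset Ctr) (x x' : Ctr)
    (hx : x ∈ Chat s q r π X') (hx' : x' ∈ X') (hagent : x'.1 = x.1)
    (hwait : x'.2 < x.2) (hrej : x' ∉ Chat s q r π X') :
    ((Chat s q r π X').filter fun y => y.2 = x'.2 ∧ π y.1 < π x.1).card = r x'.2 :=
  chat_earlyFilling_general s q r π hπ X' x x' hx hx' hagent hwait
end

section
/- There exists an instance with two asylum seekers, one member state, two wait times, unit burden-sizes, quota 2, and unit capacities at each wait time, in which the member state choice rule Ĉ_m violates substitutability: there are contracts x₂, x₁, x₄ such that x₄ ∈ Ĉ_m({x₂, x₁, x₄}) but x₄ ∉ Ĉ_m({x₂, x₄}). -/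
lemma run_step (s : ℕ → ℕ) (q : ℕ) (r π : ℕ → ℕ) (excl : Bool)
    (X' : Finset Ctr) (n : ℕ) (acc Zv : Finset Ctr)
    (hq : ¬ q ≤ acc.sum (fun x => s x.1))
    (hZ : (X'.filter fun x =>
      (acc.filter fun y => y.2 = x.2).card < r x.2 ∧
      (excl = true → ∀ y ∈ acc, y.1 ≠ x.1) ∧
      (excl = false → x ∉ acc)) = Zv)
    (h : Zv.Nonempty) :
    run s q r π excl X' (n+1) acc
      = run s q r π excl X' n (insert (pick π Zv h) acc) := by
  subst hZ
  rw [run]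
  rw [if_neg hq]
  split
  · rfl
  · exact absurd h (by assumption)

lemma run_stop (s : ℕ → ℕ) (q : ℕ) (r π : ℕ → ℕ) (excl : Bool)
    (X' : Finset Ctr) (n : ℕ) (acc : Finset Ctr)
    (hq : q ≤ acc.sum (fun x => s x.1)) :
    run s q r π excl X' (n+1) acc = acc := by
  rw [run]; simp only [if_pos hq]

lemma run_empty (s : ℕ → ℕ) (q : ℕ) (r π : ℕ → ℕ) (excl : Bool)
    (X' : Finset Ctr) (n : ℕ) (acc : Finset Ctr)
    (hq : ¬ q ≤ acc.sum (fun x => s x.1))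
    (hZ : (X'.filter fun x =>
      (acc.filter fun y => y.2 = x.2).card < r x.2 ∧
      (excl = true → ∀ y ∈ acc, y.1 ≠ x.1) ∧
      (excl = false → x ∉ acc)) = ∅) :
    run s q r π excl X' (n+1) acc = acc := by
  rw [run]
  rw [if_neg hq]
  split
  · next h => rw [hZ] at h; exact absurd h (by simp)
  · rfl

/-- Example 1: with two unit-size asylum seekers `0, 1`
(priority `0` over `1`, ranks given by `id`), quota `2`, wait times `0 < 1`,
unit capacities, and contracts `x₁ = (0,0)`, `x₂ = (0,1)`, `x₄ = (1,1)`,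
the rule `Ĉ_m` violates substitutability:
`x₄ ∈ Ĉ_m({x₂, x₁, x₄})` but `x₄ ∉ Ĉ_m({x₂, x₄})`. -/
theorem chat_not_substitutable :
    ((1, 1) : Ctr) ∈ Chat (fun _ => 1) 2 (fun _ => 1) id {(0, 1), (0, 0), (1, 1)} ∧
    ((1, 1) : Ctr) ∉ Chat (fun _ => 1) 2 (fun _ => 1) id {(0, 1), (1, 1)} := by
  constructor
  · rw [Chat]
    show ((1,1) : Ctr) ∈ run (fun _ => 1) 2 (fun _ => 1) id true {(0,1),(0,0),(1,1)} (3+1) ∅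
    rw [run_step _ _ _ _ _ _ 3 ∅ {(0,1),(0,0),(1,1)} (by norm_num) (by decide) (by decide)]
    have hp1 : ∀ h, pick id ({(0,1),(0,0),(1,1)} : Finset Ctr) h = (0,0) := fun _ => rfl
    rw [hp1]
    show ((1,1) : Ctr) ∈ run (fun _ => 1) 2 (fun _ => 1) id true {(0,1),(0,0),(1,1)} (2+1) {(0,0)}
    rw [run_step _ _ _ _ _ _ 2 {(0,0)} {(1,1)} (by decide) (by decide) (by decide)]
    have hp2 : ∀ h, pick id ({(1,1)} : Finset Ctr) h = (1,1) := fun _ => rfl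
    rw [hp2]
    show ((1,1) : Ctr) ∈ run (fun _ => 1) 2 (fun _ => 1) id true {(0,1),(0,0),(1,1)} (1+1) {(1,1),(0,0)}
    rw [run_stop _ _ _ _ _ _ 1 _ (by decide)]
    decide
  · rw [Chat]
    show ((1,1) : Ctr) ∉ run (fun _ => 1) 2 (fun _ => 1) id true {(0,1),(1,1)} (2+1) ∅
    rw [run_step _ _ _ _ _ _ 2 ∅ {(0,1),(1,1)} (by norm_num) (by decide) (by decide)]
    have hp1 : ∀ h, pick id ({(0,1),(1,1)} : Finset Ctr) h = (0,1) := fun _ => rfl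
    rw [hp1]
    show ((1,1) : Ctr) ∉ run (fun _ => 1) 2 (fun _ => 1) id true {(0,1),(1,1)} (1+1) {(0,1)}
    rw [run_empty _ _ _ _ _ _ 1 _ (by decide) (by decide)]
    decide
end

section
/- The modified choice rule Ĉ'_m (which keeps already-accepted asylum seekers in the running for additional contracts) is a completion of Ĉ_m: for every set of contracts X', either Ĉ'_m(X') = Ĉ_m(X'), or Ĉ'_m(X') contains two distinct contracts naming the same asylum seeker. -/
lemma run_mono (s : ℕ → ℕ) (q : ℕ) (r π : ℕ → ℕ) (excl : Bool) (X' : Finset Ctr) :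
    ∀ n acc, acc ⊆ run s q r π excl X' n acc := by
  intro n
  induction n with
  | zero => intro acc; simp [run]
  | succ n ih =>
    intro acc
    rw [run]
    by_cases hq : q ≤ acc.sum (fun x => s x.1)
    · simp [hq]
    · simp only [hq, if_false]
      split
      · exact (Finset.subset_insert _ _).trans (ih _)
      · exact Finset.Subset.refl _

noncomputable def keyf (π : ℕ → ℕ) (x : Ctr) : Lex (ℕ × Lex (ℕ × ℕ)) :=
  toLex ((π x.1 : ℕ), toLex (x.2, x.1))

lemma pick_eq (π : ℕ → ℕ) (Z : Finset Ctr) (h : Z.Nonempty) :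
    ∃ x ∈ Z, pick π Z h = x ∧
      keyf π x = (Z.image (keyf π)).min' (h.image _) := by
  obtain ⟨x, hx, hk⟩ := Finset.mem_image.1 ((Z.image (keyf π)).min'_mem (h.image _))
  refine ⟨x, hx, ?_, hk⟩
  have : (Z.image fun x => toLex ((π x.1 : ℕ), toLex (x.2, x.1))) = Z.image (keyf π) := rfl
  simp only [pick, this, hk.symm, keyf, ofLex_toLex]

lemma pick_mem (π : ℕ → ℕ) (Z : Finset Ctr) (h : Z.Nonempty) : pick π Z h ∈ Z := by
  obtain ⟨x, hx, he, -⟩ := pick_eq π Z h; rwa [he]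

lemma pick_subset_eq (π : ℕ → ℕ) {Z₁ Z₂ : Finset Ctr} (hsub : Z₁ ⊆ Z₂)
    (h₁ : Z₁.Nonempty) (h₂ : Z₂.Nonempty) (hmem : pick π Z₂ h₂ ∈ Z₁) :
    pick π Z₁ h₁ = pick π Z₂ h₂ := by
  obtain ⟨x, hx, he, hk⟩ := pick_eq π Z₁ h₁
  obtain ⟨y, hy, he', hk'⟩ := pick_eq π Z₂ h₂
  rw [he'] at hmem
  have h12 : (Z₂.image (keyf π)).min' (h₂.image _) ≤ (Z₁.image (keyf π)).min' (h₁.image _) := by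
    apply Finset.min'_le
    rw [← hk]
    exact Finset.mem_image_of_mem _ (hsub hx)
  have h21 : (Z₁.image (keyf π)).min' (h₁.image _) ≤ (Z₂.image (keyf π)).min' (h₂.image _) := by
    rw [← hk']
    exact Finset.min'_le _ _ (Finset.mem_image_of_mem _ hmem)
  have heq : (Z₁.image (keyf π)).min' (h₁.image _) = (Z₂.image (keyf π)).min' (h₂.image _) :=
    le_antisymm h21 h12
  simp only [pick]
  rw [show (Z₁.image fun x => toLex ((π x.1 : ℕ), toLex (x.2, x.1))).min' (h₁.image _)
      = (Z₂.image fun x => toLex ((π x.1 : ℕ), toLex (x.2, x.1))).min' (h₂.image _) from heq]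

lemma run_main (s : ℕ → ℕ) (q : ℕ) (r π : ℕ → ℕ) (X' : Finset Ctr) :
    ∀ n acc, (∀ x ∈ acc, ∀ y ∈ acc, x ≠ y → x.1 ≠ y.1) →
    run s q r π false X' n acc = run s q r π true X' n acc ∨
    ∃ x ∈ run s q r π false X' n acc, ∃ y ∈ run s q r π false X' n acc,
      x ≠ y ∧ x.1 = y.1 := by
  intro n
  induction n with
  | zero => intro acc _; left; rfl
  | succ n ih =>
    intro acc hacc
    set Z0 : Finset Ctr := X'.filter fun x =>
      (acc.filter fun y => y.2 = x.2).card < r x.2 ∧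
      ((false : Bool) = true → ∀ y ∈ acc, y.1 ≠ x.1) ∧
      ((false : Bool) = false → x ∉ acc) with hZ0
    set Z1 : Finset Ctr := X'.filter fun x =>
      (acc.filter fun y => y.2 = x.2).card < r x.2 ∧
      ((true : Bool) = true → ∀ y ∈ acc, y.1 ≠ x.1) ∧
      ((true : Bool) = false → x ∉ acc) with hZ1
    have hrun0 : run s q r π false X' (n+1) acc =
        if q ≤ acc.sum (fun x => s x.1) then acc
        else if h : Z0.Nonempty then
          run s q r π false X' n (insert (pick π Z0 h) acc) else acc := by
      rw [run]
    have hrun1 : run s q r π true X' (n+1) acc =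
        if q ≤ acc.sum (fun x => s x.1) then acc
        else if h : Z1.Nonempty then
          run s q r π true X' n (insert (pick π Z1 h) acc) else acc := by
      rw [run]
    have hsub : Z1 ⊆ Z0 := by
      intro x hx
      rw [hZ1, Finset.mem_filter] at hx
      rw [hZ0, Finset.mem_filter]
      refine ⟨hx.1, hx.2.1, fun h => (Bool.false_ne_true h).elim, fun _ hmem => ?_⟩
      exact hx.2.2.1 rfl x hmem rfl
    by_cases hq : q ≤ acc.sum (fun x => s x.1)
    · left; rw [hrun0, hrun1, if_pos hq, if_pos hq]
    · rw [hrun0, hrun1, if_neg hq, if_neg hq]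
      by_cases h0 : Z0.Nonempty
      · rw [dif_pos h0]
        set p := pick π Z0 h0 with hp
        have hpZ0 : p ∈ Z0 := pick_mem π Z0 h0
        have hpfilter := Finset.mem_filter.1 (hZ0 ▸ hpZ0)
        have hpnotacc : p ∉ acc := hpfilter.2.2.2 rfl
        by_cases hsame : ∃ y ∈ acc, y.1 = p.1
        · right
          obtain ⟨y, hy, hy1⟩ := hsame
          have hsubrun := run_mono s q r π false X' n (insert p acc)
          exact ⟨p, hsubrun (Finset.mem_insert_self _ _), y,
            hsubrun (Finset.mem_insert_of_mem hy),
            fun h => hpnotacc (h ▸ hy), hy1.symm⟩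
        · push_neg at hsame
          have hpZ1 : p ∈ Z1 := by
            rw [hZ1, Finset.mem_filter]
            exact ⟨hpfilter.1, hpfilter.2.1,
              fun _ y hy => hsame y hy, fun h => (Bool.true_eq_false.mp h).elim⟩
          have h1 : Z1.Nonempty := ⟨p, hpZ1⟩
          rw [dif_pos h1]
          have hpe : pick π Z1 h1 = p := pick_subset_eq π hsub h1 h0 hpZ1
          rw [hpe]
          apply ih
          intro x hx y hy hxy
          rcases Finset.mem_insert.1 hx with hx | hx
          · rcases Finset.mem_insert.1 hy with hy | hy
            · exact absurd (hx.trans hy.symm) hxy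
            · exact hx ▸ fun h => hsame y hy h.symm
          · rcases Finset.mem_insert.1 hy with hy | hy
            · exact hy ▸ fun h => hsame x hx h
            · exact hacc x hx y hy hxy
      · rw [dif_neg h0]
        have h1 : ¬ Z1.Nonempty := fun ⟨x, hx⟩ => h0 ⟨x, hsub hx⟩
        rw [dif_neg h1]
        left; rfl

/-- Proposition 2(i): `Ĉ'_m` is a completion of `Ĉ_m`: on
every input it either coincides with `Ĉ_m` or accepts two distinct contracts of
the same asylum seeker. -/
theorem chat'_completion (s : ℕ → ℕ) (q : ℕ) (r π : ℕ → ℕ)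
    (hπ : Function.Injective π) (X' : Finset Ctr) :
    Chat' s q r π X' = Chat s q r π X' ∨
    ∃ x ∈ Chat' s q r π X', ∃ y ∈ Chat' s q r π X', x ≠ y ∧ x.1 = y.1 := by
  simp only [Chat, Chat']
  exact run_main s q r π X' (X'.card + 1) ∅
    (fun x hx => absurd hx (Finset.notMem_empty x))
end

section
/- If the priority order π_m satisfies large burden-size priority (a π_m a' implies s(a) ≥ s(a')), then the completion Ĉ'_m satisfies substitutability: for all X' ⊆ X and contracts x, x' ∉ X', x ∈ Ĉ'_m(X' ∪ {x, x'}) implies x ∈ Ĉ'_m(X' ∪ {x}). -/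
/-!
`Ĉ'_m` considers contracts in the lexicographic order of `(rank, wait time, asylum seeker)`
and accepts a contract exactly when its wait time still has capacity among the contracts
accepted before it and their burden is below `q`.

Compare the runs `A` on `X' ∪ {x, x'}` and `B` on `X' ∪ {x}`. Along this order, the part of `B`
before any point is the part of `A` with `x'` removed, possibly with one contract `e` added in
its place: `e` has the wait time of `x'` (in `A` its slot was taken by `x'`) and, coming after
`x'`, a burden-size at most `s x'` by large burden-size priority — unless the part of `A` already
exhausts the quota. In each case every contract feasible for `A`'s prefix is feasible for `B`'s
prefix, so `x ∈ A` gives `x ∈ B`.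
-/

namespace GreedyChoice

def key (π : ℕ → ℕ) (x : Ctr) : Lex (ℕ × Lex (ℕ × ℕ)) := toLex (π x.1, toLex (x.2, x.1))

def pref (π : ℕ → ℕ) (R : Finset Ctr) (k : Lex (ℕ × Lex (ℕ × ℕ))) : Finset Ctr :=
  R.filter fun z => key π z < k

def waitCount (P : Finset Ctr) (w : ℕ) : ℕ := (P.filter fun z => z.2 = w).card

def burden (s : ℕ → ℕ) (P : Finset Ctr) : ℕ := P.sum fun z => s z.1

def Feasible (s : ℕ → ℕ) (q : ℕ) (r : ℕ → ℕ) (P : Finset Ctr) (y : Ctr) : Prop :=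
  waitCount P y.2 < r y.2 ∧ burden s P < q

def candidates (r : ℕ → ℕ) (X acc : Finset Ctr) : Finset Ctr :=
  X.filter fun z => waitCount acc z.2 < r z.2 ∧ z ∉ acc

structure IsGreedy (s : ℕ → ℕ) (q : ℕ) (r π : ℕ → ℕ) (X A : Finset Ctr) : Prop where
  subset : A ⊆ X
  mem_iff : ∀ y ∈ X, y ∈ A ↔ Feasible s q r (pref π A (key π y)) y

variable {s : ℕ → ℕ} {q : ℕ} {r π : ℕ → ℕ}

lemma key_injective : Function.Injective (key π) := by
  intro a b h
  simp only [key, toLex_inj, Prod.mk.injEq] at h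
  exact Prod.ext h.2.2 h.2.1

lemma burden_le_of_key_lt (hπ : Function.Injective π)
    (hlarge : ∀ a a' : ℕ, π a < π a' → s a' ≤ s a) {x y : Ctr} (h : key π x < key π y) :
    s y.1 ≤ s x.1 := by
  rcases Prod.Lex.toLex_lt_toLex.mp h with hlt | ⟨heq, -⟩
  · exact hlarge _ _ hlt
  · rw [hπ heq]

lemma key_pick (Z : Finset Ctr) (h : Z.Nonempty) :
    key π (pick π Z h) = (Z.image (key π)).min' (h.image _) := by
  obtain ⟨z, -, hz⟩ := Finset.mem_image.mp (Finset.min'_mem _ (h.image (key π)))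
  change key π ((ofLex (ofLex ((Z.image (key π)).min' (h.image _))).2).2,
    (ofLex (ofLex ((Z.image (key π)).min' (h.image _))).2).1) = _
  rw [← hz]
  rfl

lemma pick_mem (Z : Finset Ctr) (h : Z.Nonempty) : pick π Z h ∈ Z := by
  obtain ⟨z, hz, hkz⟩ := Finset.mem_image.mp (Finset.min'_mem _ (h.image (key π)))
  rwa [← key_injective (hkz.trans (key_pick Z h).symm)]

lemma key_pick_le (Z : Finset Ctr) (h : Z.Nonempty) {z : Ctr} (hz : z ∈ Z) :
    key π (pick π Z h) ≤ key π z := by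
  rw [key_pick]
  exact Finset.min'_le _ _ (Finset.mem_image_of_mem _ hz)

lemma pref_mono {R R' : Finset Ctr} (h : R ⊆ R') (k : Lex (ℕ × Lex (ℕ × ℕ))) :
    pref π R k ⊆ pref π R' k :=
  Finset.filter_subset_filter _ h

lemma pref_eq_self {R : Finset Ctr} {k : Lex (ℕ × Lex (ℕ × ℕ))} (h : ∀ z ∈ R, key π z < k) :
    pref π R k = R :=
  Finset.filter_true_of_mem h

lemma pref_insert_of_le {R : Finset Ctr} {p : Ctr} {k : Lex (ℕ × Lex (ℕ × ℕ))}
    (h : k ≤ key π p) : pref π (insert p R) k = pref π R k := by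
  rw [pref, Finset.filter_insert, if_neg h.not_gt, pref]

lemma waitCount_mono {P P' : Finset Ctr} (h : P ⊆ P') (w : ℕ) : waitCount P w ≤ waitCount P' w :=
  Finset.card_le_card (Finset.filter_subset_filter _ h)

lemma burden_mono {P P' : Finset Ctr} (h : P ⊆ P') : burden s P ≤ burden s P' :=
  Finset.sum_le_sum_of_subset h

lemma Feasible.mono {P P' : Finset Ctr} {y : Ctr} (hy : Feasible s q r P' y) (h : P ⊆ P') :
    Feasible s q r P y :=
  ⟨(waitCount_mono h _).trans_lt hy.1, (burden_mono h).trans_lt hy.2⟩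

lemma mem_candidates {X acc : Finset Ctr} {z : Ctr} :
    z ∈ candidates r X acc ↔ z ∈ X ∧ waitCount acc z.2 < r z.2 ∧ z ∉ acc :=
  Finset.mem_filter

lemma candidates_anti {X acc acc' : Finset Ctr} (h : acc ⊆ acc') :
    candidates r X acc' ⊆ candidates r X acc := by
  intro z hz
  obtain ⟨hzX, hcap, hzacc⟩ := mem_candidates.mp hz
  exact mem_candidates.mpr ⟨hzX, (waitCount_mono h _).trans_lt hcap, fun hm => hzacc (h hm)⟩

lemma run_false_succ (X : Finset Ctr) (n : ℕ) (acc : Finset Ctr) :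
    run s q r π false X (n + 1) acc =
      if q ≤ burden s acc then acc
      else if h : (candidates r X acc).Nonempty then
        run s q r π false X n (insert (pick π (candidates r X acc) h) acc)
      else acc := by
  have hZ : (X.filter fun x =>
      (acc.filter fun y => y.2 = x.2).card < r x.2 ∧
      ((false : Bool) = true → ∀ y ∈ acc, y.1 ≠ x.1) ∧
      ((false : Bool) = false → x ∉ acc)) = candidates r X acc := by
    ext z
    simp only [mem_candidates, Finset.mem_filter, waitCount]
    tauto
  rw [run, hZ]
  rfl

variable (s q r π) in
structure GreedyInv (X acc : Finset Ctr) : Prop where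
  subset : acc ⊆ X
  feasible : ∀ y ∈ acc, Feasible s q r (pref π acc (key π y)) y
  key_lt : ∀ y ∈ candidates r X acc, ∀ z ∈ acc, key π z < key π y
  cap_le : ∀ y ∈ X, y ∉ acc → y ∉ candidates r X acc →
    r y.2 ≤ waitCount (pref π acc (key π y)) y.2

lemma greedyInv_empty (X : Finset Ctr) : GreedyInv s q r π X ∅ where
  subset := Finset.empty_subset X
  feasible := by simp
  key_lt := by simp
  cap_le y hyX _ hy := by
    simpa [mem_candidates, hyX, pref, waitCount] using hy

namespace GreedyInv

variable {X acc : Finset Ctr}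

lemma insert_pick (hI : GreedyInv s q r π X acc) (hq : burden s acc < q)
    (hZ : (candidates r X acc).Nonempty) :
    GreedyInv s q r π X (insert (pick π (candidates r X acc) hZ) acc) := by
  set p := pick π (candidates r X acc) hZ
  obtain ⟨hpX, hpcap, hpacc⟩ := mem_candidates.mp (pick_mem _ hZ)
  have hacc_p : ∀ z ∈ acc, key π z < key π p := hI.key_lt p (pick_mem _ hZ)
  have hlt : ∀ y ∈ candidates r X acc, y ∉ insert p acc → ∀ z ∈ insert p acc,
      key π z < key π y := by
    intro y hy hyp z hz
    rcases Finset.mem_insert.mp hz with rfl | hz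
    · exact (key_pick_le _ hZ hy).lt_of_ne
        (key_injective.ne fun he => hyp (he ▸ Finset.mem_insert_self _ _))
    · exact hI.key_lt y hy z hz
  refine ⟨Finset.insert_subset hpX hI.subset, ?_, ?_, ?_⟩
  · intro y hy
    rcases Finset.mem_insert.mp hy with rfl | hy
    · rw [pref_insert_of_le le_rfl, pref_eq_self hacc_p]
      exact ⟨hpcap, hq⟩
    · rw [pref_insert_of_le (hacc_p y hy).le]
      exact hI.feasible y hy
  · intro y hy
    exact hlt y (candidates_anti (Finset.subset_insert _ _) hy)
      (mem_candidates.mp hy).2.2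
  · intro y hyX hyacc hyZ
    by_cases hyZ₀ : y ∈ candidates r X acc
    · rw [pref_eq_self (hlt y hyZ₀ hyacc)]
      by_contra hcap
      exact hyZ (mem_candidates.mpr ⟨hyX, not_le.mp hcap, hyacc⟩)
    · exact (hI.cap_le y hyX (fun h => hyacc (Finset.mem_insert_of_mem h)) hyZ₀).trans
        (waitCount_mono (pref_mono (Finset.subset_insert _ _) _) _)

lemma isGreedy (hI : GreedyInv s q r π X acc)
    (hstop : (candidates r X acc).Nonempty → q ≤ burden s acc) : IsGreedy s q r π X acc := by
  refine ⟨hI.subset, fun y hyX => ⟨hI.feasible y, fun hy => ?_⟩⟩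
  by_contra hyacc
  by_cases hyZ : y ∈ candidates r X acc
  · rw [pref_eq_self (hI.key_lt y hyZ)] at hy
    exact (hstop ⟨y, hyZ⟩).not_gt hy.2
  · exact (hI.cap_le y hyX hyacc hyZ).not_gt hy.1

lemma isGreedy_run (hI : GreedyInv s q r π X acc) {n : ℕ} (hn : (X \ acc).card ≤ n) :
    IsGreedy s q r π X (run s q r π false X n acc) := by
  induction n generalizing acc with
  | zero =>
    have hXacc : X ⊆ acc := Finset.sdiff_eq_empty_iff_subset.mp (Finset.card_eq_zero.mp
      (Nat.le_zero.mp hn))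
    refine hI.isGreedy fun ⟨y, hy⟩ => absurd (hXacc (mem_candidates.mp hy).1) ?_
    exact (mem_candidates.mp hy).2.2
  | succ n ih =>
    rw [run_false_succ]
    split_ifs with hq hZ
    · exact hI.isGreedy fun _ => hq
    · refine ih (hI.insert_pick (not_le.mp hq) hZ) ?_
      obtain ⟨hpX, -, hpacc⟩ := mem_candidates.mp (pick_mem _ hZ)
      rw [Finset.sdiff_insert, Finset.card_erase_of_mem (Finset.mem_sdiff.mpr ⟨hpX, hpacc⟩)]
      omega
    · exact hI.isGreedy fun h => absurd h hZ

end GreedyInv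

variable (s q r π) in
lemma isGreedy_chat' (X : Finset Ctr) : IsGreedy s q r π X (Chat' s q r π X) :=
  (greedyInv_empty X).isGreedy_run (by simp)

variable (s q) in
def Displaced (x' : Ctr) (P Q : Finset Ctr) : Prop :=
  Q = P.erase x' ∨
    (∃ e, e ∉ P ∧ x' ∈ P ∧ e.2 = x'.2 ∧ s e.1 ≤ s x'.1 ∧ Q = insert e (P.erase x')) ∨
    q ≤ burden s P

section Replace

variable {P : Finset Ctr} {e x' : Ctr}

lemma waitCount_insert_erase (he : e ∉ P) (hx' : x' ∈ P) (hw : e.2 = x'.2) (w : ℕ) :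
    waitCount (insert e (P.erase x')) w = waitCount P w := by
  unfold waitCount
  rw [Finset.filter_insert, Finset.filter_erase]
  by_cases hew : e.2 = w
  · have hx'w : x' ∈ P.filter fun z => z.2 = w := Finset.mem_filter.mpr ⟨hx', hw ▸ hew⟩
    rw [if_pos hew, Finset.card_insert_of_notMem
        (fun h => he (Finset.mem_of_mem_filter _ (Finset.mem_of_mem_erase h))),
      Finset.card_erase_add_one hx'w]
  · rw [if_neg hew, Finset.erase_eq_of_notMem]
    exact fun h => hew (hw.trans (Finset.mem_filter.mp h).2)

lemma burden_insert_erase_le (he : e ∉ P) (hx' : x' ∈ P) (hs : s e.1 ≤ s x'.1) :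
    burden s (insert e (P.erase x')) ≤ burden s P := by
  unfold burden
  rw [Finset.sum_insert fun h => he (Finset.mem_of_mem_erase h), ← Finset.sum_erase_add P _ hx']
  omega

end Replace

lemma Feasible.of_displaced {x' y : Ctr} {P Q : Finset Ctr} (hy : Feasible s q r P y)
    (h : Displaced s q x' P Q) : Feasible s q r Q y := by
  rcases h with rfl | ⟨e, he, hx', hw, hs, rfl⟩ | hPq
  · exact hy.mono (Finset.erase_subset _ _)
  · exact ⟨(waitCount_insert_erase he hx' hw _).trans_lt hy.1,
      (burden_insert_erase_le he hx' hs).trans_lt hy.2⟩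
  · exact absurd hy.2 hPq.not_gt

lemma mem_of_waitCount_erase_lt {P : Finset Ctr} {x' : Ctr} {w : ℕ}
    (h : waitCount (P.erase x') w < waitCount P w) : x' ∈ P ∧ x'.2 = w := by
  by_contra hx'
  refine h.ne ?_
  unfold waitCount
  rw [Finset.filter_erase, Finset.erase_eq_of_notMem fun h => hx' (Finset.mem_filter.mp h)]

section Step

open Classical

variable {x' y : Ctr} {P : Finset Ctr}

lemma Displaced.step_erase (hyP : y ∉ P) (hs : x' ∈ P → s y.1 ≤ s x'.1)
    (hPq : burden s P < q) :
    Displaced s q x' (if Feasible s q r P y then insert y P else P)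
      (if y ≠ x' ∧ Feasible s q r (P.erase x') y then insert y (P.erase x') else P.erase x') := by
  by_cases hyx : y = x'
  · subst hyx
    rw [if_neg fun h : y ≠ y ∧ _ => h.1 rfl]
    left
    split_ifs
    exacts [by rw [Finset.erase_insert hyP, Finset.erase_eq_of_notMem hyP], rfl]
  by_cases hF : Feasible s q r P y
  · rw [if_pos hF, if_pos ⟨hyx, hF.mono (Finset.erase_subset _ _)⟩]
    exact Or.inl (Finset.erase_insert_of_ne hyx).symm
  rw [if_neg hF]
  by_cases hFQ : Feasible s q r (P.erase x') y
  · have hcap : r y.2 ≤ waitCount P y.2 := not_lt.mp fun hlt => hF ⟨hlt, hPq⟩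
    obtain ⟨hx', hw⟩ := mem_of_waitCount_erase_lt (hFQ.1.trans_le hcap)
    rw [if_pos ⟨hyx, hFQ⟩]
    exact Or.inr (Or.inl ⟨y, hyP, hx', hw.symm, hs hx', rfl⟩)
  · rw [if_neg fun h => hFQ h.2]
    exact Or.inl rfl

lemma Displaced.step_replace {e : Ctr} (he : e ∉ P) (hx' : x' ∈ P) (hw : e.2 = x'.2)
    (hse : s e.1 ≤ s x'.1) (hyP : y ∉ P) (hye : y ≠ e) (hPq : burden s P < q) :
    Displaced s q x' (if Feasible s q r P y then insert y P else P)
      (if y ≠ x' ∧ Feasible s q r (insert e (P.erase x')) y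
        then insert y (insert e (P.erase x')) else insert e (P.erase x')) := by
  have hyx : y ≠ x' := fun h => hyP (h ▸ hx')
  have hD : Displaced s q x' P (insert e (P.erase x')) := Or.inr (Or.inl ⟨e, he, hx', hw, hse, rfl⟩)
  by_cases hF : Feasible s q r P y
  · rw [if_pos hF, if_pos ⟨hyx, hF.of_displaced hD⟩]
    refine Or.inr (Or.inl ⟨e, fun h => (Finset.mem_insert.mp h).elim hye.symm he,
      Finset.mem_insert_of_mem hx', hw, hse, ?_⟩)
    rw [Finset.erase_insert_of_ne hyx, Finset.insert_comm]
  · have hcap : r y.2 ≤ waitCount P y.2 := not_lt.mp fun hlt => hF ⟨hlt, hPq⟩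
    have hFQ : ¬Feasible s q r (insert e (P.erase x')) y := fun hFQ =>
      hcap.not_gt (waitCount_insert_erase he hx' hw _ ▸ hFQ.1)
    rw [if_neg hF, if_neg fun h => hFQ h.2]
    exact hD

lemma Displaced.step {Q : Finset Ctr} (h : Displaced s q x' P Q) (hyP : y ∉ P) (hyQ : y ∉ Q)
    (hs : x' ∈ P → s y.1 ≤ s x'.1) :
    Displaced s q x' (if Feasible s q r P y then insert y P else P)
      (if y ≠ x' ∧ Feasible s q r Q y then insert y Q else Q) := by
  by_cases hPq : q ≤ burden s P
  · refine Or.inr (Or.inr (hPq.trans (burden_mono ?_)))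
    split_ifs
    exacts [Finset.subset_insert _ _, subset_rfl]
  rcases h with rfl | ⟨e, he, hx', hw, hse, rfl⟩ | hPq'
  · exact step_erase hyP hs (not_le.mp hPq)
  · exact step_replace he hx' hw hse hyP (fun h => hyQ (h ▸ Finset.mem_insert_self _ _))
      (not_le.mp hPq)
  · exact absurd hPq' hPq

end Step

lemma pref_eq_ite {R : Finset Ctr} {y : Ctr} {k : Lex (ℕ × Lex (ℕ × ℕ))} (hyk : key π y < k)
    (hmax : ∀ z ∈ R, key π z < k → key π z ≤ key π y) :
    pref π R k = if y ∈ R then insert y (pref π R (key π y)) else pref π R (key π y) := by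
  ext z
  by_cases hzy : z = y
  · subst hzy
    split_ifs <;> simp [pref, *]
  · have hlt : z ∈ R → (key π z < k ↔ key π z < key π y) := fun hz =>
      ⟨fun h => (hmax z hz h).lt_of_ne (key_injective.ne hzy), fun h => h.trans hyk⟩
    split_ifs <;> simp only [pref, Finset.mem_filter, Finset.mem_insert, hzy, false_or] <;>
      exact ⟨fun h => ⟨h.1, (hlt h.1).mp h.2⟩, fun h => ⟨h.1, (hlt h.1).mpr h.2⟩⟩

lemma notMem_pref_key (R : Finset Ctr) (y : Ctr) : y ∉ pref π R (key π y) :=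
  fun h => (Finset.mem_filter.mp h).2.false

lemma displaced_pref (hπ : Function.Injective π) (hlarge : ∀ a a' : ℕ, π a < π a' → s a' ≤ s a)
    {X A B : Finset Ctr} {x' : Ctr} (hx' : x' ∉ X) (hA : IsGreedy s q r π (insert x' X) A)
    (hB : IsGreedy s q r π X B) (k : Lex (ℕ × Lex (ℕ × ℕ))) :
    Displaced s q x' (pref π A k) (pref π B k) := by
  have hBsub : B ⊆ insert x' X := hB.subset.trans (Finset.subset_insert _ _)
  induction k using WellFoundedLT.induction with
  | _ k ih =>
  set U := (insert x' X).filter fun z => key π z < k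
  rcases U.eq_empty_or_nonempty with hU | hU
  · have hA₀ : pref π A k = ∅ := Finset.subset_empty.mp (hU ▸ pref_mono hA.subset k)
    have hB₀ : pref π B k = ∅ := Finset.subset_empty.mp (hU ▸ pref_mono hBsub k)
    exact Or.inl (by rw [hA₀, hB₀, Finset.erase_empty])
  obtain ⟨y, hyU, hmax⟩ := Finset.exists_max_image U (key π) hU
  obtain ⟨hyX, hyk⟩ := Finset.mem_filter.mp hyU
  have hmax' {R : Finset Ctr} (hR : R ⊆ insert x' X) (z : Ctr) (hz : z ∈ R)
      (hzk : key π z < k) : key π z ≤ key π y :=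
    hmax z (Finset.mem_filter.mpr ⟨hR hz, hzk⟩)
  have hyA : y ∈ A ↔ Feasible s q r (pref π A (key π y)) y := hA.mem_iff y hyX
  have hyB : y ∈ B ↔ y ≠ x' ∧ Feasible s q r (pref π B (key π y)) y := by
    by_cases hyx : y = x'
    · subst hyx
      simpa using fun h => hx' (hB.subset h)
    · rw [hB.mem_iff y (Finset.mem_of_mem_insert_of_ne hyX hyx), and_iff_right hyx]
  have hstep := (ih (key π y) hyk).step (r := r) (notMem_pref_key A y) (notMem_pref_key B y)
    fun hx'A => burden_le_of_key_lt hπ hlarge (Finset.mem_filter.mp hx'A).2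
  rw [pref_eq_ite hyk (hmax' hA.subset), pref_eq_ite hyk (hmax' hBsub)]
  simpa only [← hyA, ← hyB] using hstep

end GreedyChoice

theorem chat'_substitutable_of_large_general (s : ℕ → ℕ) (q : ℕ) (r π : ℕ → ℕ)
    (hπ : Function.Injective π)
    (hlarge : ∀ a a' : ℕ, π a < π a' → s a' ≤ s a)
    (X' : Finset Ctr) (x x' : Ctr) (hx' : x' ∉ X')
    (h : x ∈ Chat' s q r π (insert x (insert x' X'))) :
    x ∈ Chat' s q r π (insert x X') := by
  obtain rfl | hxx' := eq_or_ne x x'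
  · rwa [Finset.insert_idem] at h
  have hx'Y : x' ∉ insert x X' := by simp [hxx'.symm, hx']
  rw [Finset.insert_comm] at h
  have hA := GreedyChoice.isGreedy_chat' s q r π (insert x' (insert x X'))
  have hB := GreedyChoice.isGreedy_chat' s q r π (insert x X')
  have hxY : x ∈ insert x X' := Finset.mem_insert_self x X'
  have hfeas := (hA.mem_iff x (Finset.mem_insert_of_mem hxY)).mp h
  exact (hB.mem_iff x hxY).mpr
    (hfeas.of_displaced (GreedyChoice.displaced_pref hπ hlarge hx'Y hA hB _))

/-- Proposition 2(iii): under large burden-size priority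
(higher priority, i.e. smaller rank, implies weakly larger burden-size), the
completion `Ĉ'_m` is substitutable. -/
theorem chat'_substitutable_of_large (s : ℕ → ℕ) (q : ℕ) (r π : ℕ → ℕ)
    (hπ : Function.Injective π)
    (hlarge : ∀ a a' : ℕ, π a < π a' → s a' ≤ s a)
    (X' : Finset Ctr) (x x' : Ctr) (hx : x ∉ X') (hx' : x' ∉ X')
    (h : x ∈ Chat' s q r π (insert x (insert x' X'))) :
    x ∈ Chat' s q r π (insert x X') :=
  chat'_substitutable_of_large_general s q r π hπ hlarge X' x x' hx' h
end

section
/- There exists an instance with three asylum seekers of heterogeneous burden-sizes s(a₁) = 1, s(a₂) = s(a₃) = 2, one member state with quota 2 and unit capacities at two wait times, such that no completion of Ĉ_m satisfies substitutability: any completion C' must satisfy C'({x₂, x₃}) = {x₂} and C'({x₁, x₂, x₃}) = {x₁, x₃}, which violates substitutability (x₃ chosen from the larger set but not the subset). -/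
def pick2 (π : ℕ → ℕ) (Z : Finset Ctr) (h : Z.Nonempty) : Ctr :=
  let k := (Z.image fun x => toLex ((π x.1 : ℕ), toLex (x.2, x.1))).min'
    (h.image _)
  ((ofLex (ofLex k).2).2, (ofLex (ofLex k).2).1)

def run2 (s : ℕ → ℕ) (q : ℕ) (r π : ℕ → ℕ) (excl : Bool)
    (X' : Finset Ctr) : ℕ → Finset Ctr → Finset Ctr
  | 0, acc => acc
  | n+1, acc =>
    let Z : Finset Ctr := X'.filter fun x =>
      (acc.filter fun y => y.2 = x.2).card < r x.2 ∧
      (excl = true → ∀ y ∈ acc, y.1 ≠ x.1) ∧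
      (excl = false → x ∉ acc)
    if q ≤ acc.sum (fun x => s x.1) then acc
    else if h : Z.Nonempty then
      run2 s q r π excl X' n (insert (pick2 π Z h) acc)
    else acc

lemma run_eq (s : ℕ → ℕ) (q : ℕ) (r π : ℕ → ℕ) (excl : Bool) (X' : Finset Ctr) :
    ∀ n acc, run s q r π excl X' n acc = run2 s q r π excl X' n acc := by
  intro n
  induction n with
  | zero => intro acc; rfl
  | succ n ih =>
    intro acc
    rw [run, run2]
    simp only [Finset.filter_congr_decidable, ih, (show pick2 = pick from rfl)]

def Chat2 (s : ℕ → ℕ) (q : ℕ) (r π : ℕ → ℕ)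
    (X' : Finset Ctr) : Finset Ctr :=
  run2 s q r π true X' (X'.card + 1) ∅

lemma Chat_eq (s q r π X') : Chat s q r π X' = Chat2 s q r π X' := run_eq ..

lemma chat_two : Chat (fun a => if a = 0 then 1 else 2) 2 (fun _ => 1) id
    {(1, 0), (2, 1)} = {(1, 0)} := by rw [Chat_eq]; decide

lemma chat_three : Chat (fun a => if a = 0 then 1 else 2) 2 (fun _ => 1) id
    {(0, 0), (1, 0), (2, 1)} = {(0, 0), (2, 1)} := by rw [Chat_eq]; decide

/-- Example 4: with asylum seekers `0, 1, 2` of burden-sizes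
`1, 2, 2`, priority `0 − 1 − 2`, quota `2`, unit capacities at wait times
`0 < 1`, and contracts `x₁ = (0,0)`, `x₂ = (1,0)`, `x₃ = (2,1)`, no completion
of `Ĉ_m` satisfies substitutability: any completion `C'` chooses
`C'({x₂,x₃}) = {x₂}` and `C'({x₁,x₂,x₃}) = {x₁,x₃}`, violating
substitutability. -/
theorem no_substitutable_completion :
    ∀ C' : Finset Ctr → Finset Ctr,
      (∀ X' : Finset Ctr, C' X' ⊆ X') →
      (∀ X' : Finset Ctr, C' X' = Chat (fun a => if a = 0 then 1 else 2) 2 (fun _ => 1) id X' ∨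
        ∃ x ∈ C' X', ∃ y ∈ C' X', x ≠ y ∧ x.1 = y.1) →
      C' {(1, 0), (2, 1)} = {(1, 0)} ∧
      C' {(0, 0), (1, 0), (2, 1)} = {(0, 0), (2, 1)} ∧
      ¬ (∀ (Y : Finset Ctr) (x x' : Ctr),
          x ∈ C' (insert x (insert x' Y)) → x ∈ C' (insert x Y)) := by
  intro C' hsub hspec
  have htwo : C' {(1, 0), (2, 1)} = {(1, 0)} := by
    rcases hspec {(1, 0), (2, 1)} with h | ⟨x, hx, y, hy, hne, hfst⟩
    · rw [h, chat_two]
    · have hx' := hsub _ hx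
      have hy' := hsub _ hy
      simp only [Finset.mem_insert, Finset.mem_singleton] at hx' hy'
      rcases hx' with rfl | rfl <;> rcases hy' with rfl | rfl <;> simp_all
  have hthree : C' {(0, 0), (1, 0), (2, 1)} = {(0, 0), (2, 1)} := by
    rcases hspec {(0, 0), (1, 0), (2, 1)} with h | ⟨x, hx, y, hy, hne, hfst⟩
    · rw [h, chat_three]
    · have hx' := hsub _ hx
      have hy' := hsub _ hy
      simp only [Finset.mem_insert, Finset.mem_singleton] at hx' hy'
      rcases hx' with rfl | rfl | rfl <;> rcases hy' with rfl | rfl | rfl <;> simp_all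
  refine ⟨htwo, hthree, fun h => ?_⟩
  have e1 : (insert ((2,1) : Ctr) (insert ((0,0) : Ctr) ({(1,0)} : Finset Ctr))) = {(0, 0), (1, 0), (2, 1)} := by decide
  have e2 : (insert ((2,1) : Ctr) ({(1,0)} : Finset Ctr)) = {(1, 0), (2, 1)} := by decide
  have := h {(1,0)} (2,1) (0,0) (by rw [e1, hthree]; decide)
  rw [e2, htwo] at this
  simp at this
end

section
/- There exists an instance with three asylum seekers of burden-sizes s(a₁) = 2, s(a₂) = s(a₃) = 1, one member state with quota 2, a single wait time with capacity 2, in which no completion of Ĉ_m satisfies the law of aggregate demand: any completion C' must satisfy C'({x₂, x₃}) = {x₂, x₃} and C'({x₁, x₂, x₃}) = {x₁}, so |C'({x₁, x₂, x₃})| < |C'({x₂, x₃})|. -/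

lemma pick_pair : ∀ h, pick id {(1,0),(2,0)} h = (1,0) := by
  intro h
  have him : (({(1,0),(2,0)} : Finset Ctr).image fun x => toLex ((id x.1 : ℕ), toLex (x.2, x.1)))
      = {toLex ((1:ℕ), toLex ((0:ℕ),(1:ℕ))), toLex ((2:ℕ), toLex ((0:ℕ),(2:ℕ)))} := rfl
  have hmin : (({(1,0),(2,0)} : Finset Ctr).image fun x => toLex ((id x.1 : ℕ), toLex (x.2, x.1))).min' (h.image _)
      = toLex ((1:ℕ), toLex ((0:ℕ),(1:ℕ))) := by
    apply le_antisymm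
    · apply Finset.min'_le; rw [him]; exact Finset.mem_insert_self _ _
    · apply Finset.le_min'; intro y hy; rw [him] at hy; fin_cases hy <;> decide
  rw [pick]; simp only [hmin]; rfl

lemma pick_single : ∀ h, pick id {(2,0)} h = (2,0) := by
  intro h
  have hmin : (({(2,0)} : Finset Ctr).image fun x => toLex ((id x.1 : ℕ), toLex (x.2, x.1))).min' (h.image _)
      = toLex ((2:ℕ), toLex ((0:ℕ),(2:ℕ))) := by
    apply le_antisymm
    · apply Finset.min'_le; exact Finset.mem_singleton_self _
    · apply Finset.le_min'; intro y hy; fin_cases hy; decide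
  rw [pick]; simp only [hmin]; rfl

lemma pick_triple : ∀ h, pick id {(0,0),(1,0),(2,0)} h = (0,0) := by
  intro h
  have him : (({(0,0),(1,0),(2,0)} : Finset Ctr).image fun x => toLex ((id x.1 : ℕ), toLex (x.2, x.1)))
      = {toLex ((0:ℕ), toLex ((0:ℕ),(0:ℕ))), toLex ((1:ℕ), toLex ((0:ℕ),(1:ℕ))), toLex ((2:ℕ), toLex ((0:ℕ),(2:ℕ)))} := rfl
  have hmin : (({(0,0),(1,0),(2,0)} : Finset Ctr).image fun x => toLex ((id x.1 : ℕ), toLex (x.2, x.1))).min' (h.image _)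
      = toLex ((0:ℕ), toLex ((0:ℕ),(0:ℕ))) := by
    apply le_antisymm
    · apply Finset.min'_le; rw [him]; exact Finset.mem_insert_self _ _
    · apply Finset.le_min'; intro y hy; rw [him] at hy; fin_cases hy <;> decide
  rw [pick]; simp only [hmin]; rfl

set_option maxHeartbeats 1000000 in
lemma Chat_pair :
    Chat (fun a => if a = 0 then 2 else 1) 2 (fun _ => 2) id {(1, 0), (2, 0)} = {(1,0),(2,0)} := by
  have hc : (({(1, 0), (2, 0)} : Finset Ctr)).card + 1 = 3 := rfl
  rw [Chat, hc]
  rw [run]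
  norm_num [Finset.filter_insert, Finset.filter_singleton, pick_pair]
  rw [run]
  norm_num [Finset.filter_insert, Finset.filter_singleton, pick_single]
  rw [run]
  norm_num [Finset.filter_insert, Finset.filter_singleton]
  exact Finset.pair_comm _ _

set_option maxHeartbeats 1000000 in
lemma Chat_triple :
    Chat (fun a => if a = 0 then 2 else 1) 2 (fun _ => 2) id {(0, 0), (1, 0), (2, 0)} = {(0,0)} := by
  have hc : (({(0, 0), (1, 0), (2, 0)} : Finset Ctr)).card + 1 = 4 := rfl
  rw [Chat, hc]
  rw [run]
  norm_num [Finset.filter_insert, Finset.filter_singleton, pick_triple, -Prod.mk_zero_zero]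
  rw [run]
  norm_num [Finset.filter_insert, Finset.filter_singleton, -Prod.mk_zero_zero]

lemma distinct_choice (C' : Finset Ctr → Finset Ctr) (X' : Finset Ctr)
    (hsub : C' X' ⊆ X') (hinj : ∀ x ∈ X', ∀ y ∈ X', x.1 = y.1 → x = y)
    (h : C' X' = Chat (fun a => if a = 0 then 2 else 1) 2 (fun _ => 2) id X' ∨
        ∃ x ∈ C' X', ∃ y ∈ C' X', x ≠ y ∧ x.1 = y.1) :
    C' X' = Chat (fun a => if a = 0 then 2 else 1) 2 (fun _ => 2) id X' := by
  rcases h with h | ⟨x, hx, y, hy, hne, heq⟩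
  · exact h
  · exact absurd (hinj x (hsub hx) y (hsub hy) heq) hne

/-- Example 5: with asylum seekers `0, 1, 2` of burden-sizes
`2, 1, 1`, priority `0 − 1 − 2`, quota `2`, a single wait time `0` with
capacity `2`, and contracts `xᵢ = (i, 0)`, no completion of `Ĉ_m` satisfies the
law of aggregate demand: any completion `C'` chooses
`C'({x₂,x₃}) = {x₂,x₃}` and `C'({x₁,x₂,x₃}) = {x₁}`, so the chosen set
shrinks. -/
theorem no_lad_completion :
    ∀ C' : Finset Ctr → Finset Ctr,
      (∀ X' : Finset Ctr, C' X' ⊆ X') →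
      (∀ X' : Finset Ctr, C' X' = Chat (fun a => if a = 0 then 2 else 1) 2 (fun _ => 2) id X' ∨
        ∃ x ∈ C' X', ∃ y ∈ C' X', x ≠ y ∧ x.1 = y.1) →
      C' {(1, 0), (2, 0)} = {(1, 0), (2, 0)} ∧
      C' {(0, 0), (1, 0), (2, 0)} = {(0, 0)} ∧
      (C' {(0, 0), (1, 0), (2, 0)}).card < (C' {(1, 0), (2, 0)}).card := by
  intro C' hsub halt
  have h2 : C' {(1, 0), (2, 0)} = {(1, 0), (2, 0)} := by
    rw [distinct_choice C' _ (hsub _) ?_ (halt _), Chat_pair]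
    intro x hx y hy hxy
    fin_cases hx <;> fin_cases hy <;> simp_all
  have h3 : C' {(0, 0), (1, 0), (2, 0)} = {(0, 0)} := by
    rw [distinct_choice C' _ (hsub _) ?_ (halt _), Chat_triple]
    intro x hx y hy hxy
    fin_cases hx <;> fin_cases hy <;> simp_all
  refine ⟨h2, h3, ?_⟩
  rw [h2, h3]
  decide
end

section
/- In the three-asylum-seeker, four-member-state instance of Example 6 (with wait times w_l < w_m < w_h, burden-sizes s(a₁) ≤ s(a₃) < s(a₂), quotas q_{m₁} = s(a₂), q_{m₂} = q_{m₃} = 1, capacities r^{w_m}_m = |A| and r^{w_l}_m = r^{w_h}_m = 1 for m ∈ {m₁, m₂, m₃}, and the stated preferences and priorities), no stable allocation exists: every allocation admits a blocking pair. -/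
/-- A contract: `(asylum seeker, member state, wait time)`.  Asylum seekers,
member states and wait times are labelled by naturals. -/
abbrev Ctr3 := ℕ × ℕ × ℕ

open Classical in
/-- Pick, from a nonempty set of contracts at member state `m`, the
lowest-wait-time contract of the highest-priority asylum seeker. -/
noncomputable def pick3 (π : ℕ → ℕ) (m : ℕ) (Z : Finset Ctr3)
    (h : Z.Nonempty) : Ctr3 :=
  let k := (Z.image fun x => toLex ((π x.1 : ℕ), toLex (x.2.2, x.1))).min'
    (h.image _)
  ((ofLex (ofLex k).2).2, m, (ofLex (ofLex k).2).1)

open Classical in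
/-- The greedy run of member state `m`'s choice rule `Ĉ_m`, with fuel:
process asylum seekers by priority `π`, accept for each the lowest-wait-time
contract with remaining capacity, stop at quota `q`. -/
noncomputable def run3 (s : ℕ → ℕ) (q : ℕ) (r π : ℕ → ℕ) (m : ℕ)
    (X' : Finset Ctr3) : ℕ → Finset Ctr3 → Finset Ctr3
  | 0, acc => acc
  | n+1, acc =>
    let Z : Finset Ctr3 := X'.filter fun x => x.2.1 = m ∧
      (acc.filter fun y => y.2.2 = x.2.2).card < r x.2.2 ∧
      ∀ y ∈ acc, y.1 ≠ x.1
    if q ≤ acc.sum (fun x => s x.1) then acc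
    else if h : Z.Nonempty then
      run3 s q r π m X' n (insert (pick3 π m Z h) acc)
    else acc

/-- Member state `m`'s choice rule `Ĉ_m` on sets of contracts. -/
noncomputable def Chat3 (s : ℕ → ℕ) (q : ℕ) (r π : ℕ → ℕ) (m : ℕ)
    (X' : Finset Ctr3) : Finset Ctr3 :=
  run3 s q r π m X' (X'.card + 1) ∅

/-- Priorities of Example 6: `π₁₅ m` is the priority rank function of member
state `m`; states `m₁ m₂ m₃ m₄ = 0 1 2 3`, asylum seekers `a₁ a₂ a₃ = 0 1 2`.
`m₂` ranks `a₃ − a₂ − a₁`; all other states rank `a₁ − a₂ − a₃`. -/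
def π15 : ℕ → ℕ → ℕ := fun m a => if m = 1 then 2 - a else a

/-- Quotas of Example 6: `q_{m₁} = s(a₂)`, `q_{m₂} = q_{m₃} = 1`,
`q_{m₄} = Σ_a s(a)`. -/
def q15 (s : ℕ → ℕ) : ℕ → ℕ :=
  fun m => if m = 0 then s 1 else if m = 3 then s 0 + s 1 + s 2 else 1

/-- Capacities of Example 6 (wait times `w_l w_m w_h = 0 1 2`, `|A| = 3`):
`r^{w_m}_m = |A|` and `r^{w_l}_m = r^{w_h}_m = 1` for `m ∈ {m₁, m₂, m₃}`,
and `r^w_{m₄} = |A|`. -/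
def r15 : ℕ → ℕ → ℕ :=
  fun m w => if m = 3 then 3 else if w = 1 then 3 else 1

/-- An allocation: at most one contract per asylum seeker, capacities
respected, contracts drawn from the universe of the instance. -/
def Alloc15 (Y : Finset Ctr3) : Prop :=
  (∀ x ∈ Y, x.1 < 3 ∧ x.2.1 < 4 ∧ x.2.2 < 3) ∧
  (∀ a : ℕ, (Y.filter fun x => x.1 = a).card ≤ 1) ∧
  (∀ m w : ℕ, (Y.filter fun x => x.2.1 = m ∧ x.2.2 = w).card ≤ r15 m w)

/-- Stability: each member state's assigned contracts are chosen from
themselves, and no contract preferred by its asylum seeker to her assignment is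
accepted by the relevant member state alongside the allocation. -/
def Stable15 (s : ℕ → ℕ) (pref : ℕ → Ctr3 → ℕ) (Y : Finset Ctr3) : Prop :=
  (∀ m : ℕ, Chat3 s (q15 s m) (r15 m) (π15 m) m Y =
    Y.filter fun x => x.2.1 = m) ∧
  ∀ x : Ctr3, x.1 < 3 → x.2.1 < 4 → x.2.2 < 3 → x ∉ Y →
    (∀ y ∈ Y, y.1 = x.1 → pref x.1 x < pref x.1 y) →
    x ∉ Chat3 s (q15 s x.2.1) (r15 x.2.1) (π15 x.2.1) x.2.1 (insert x Y)

section Helpers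

variable (s : ℕ → ℕ) (q : ℕ) (r π : ℕ → ℕ) (m : ℕ) (X' : Finset Ctr3)

private lemma run3_zero (acc : Finset Ctr3) : run3 s q r π m X' 0 acc = acc := by
  simp [run3]

private lemma run3_of_le (n : ℕ) (acc : Finset Ctr3) (h : q ≤ acc.sum fun x => s x.1) :
    run3 s q r π m X' n acc = acc := by
  cases n with
  | zero => simp [run3]
  | succ n => simp only [run3]; rw [if_pos h]

private lemma run3_step (n : ℕ) (acc : Finset Ctr3) (hq : ¬ q ≤ acc.sum fun x => s x.1)
    (hZ : (X'.filter fun x => x.2.1 = m ∧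
      (acc.filter fun y => y.2.2 = x.2.2).card < r x.2.2 ∧
      ∀ y ∈ acc, y.1 ≠ x.1).Nonempty) :
    run3 s q r π m X' (n+1) acc
      = run3 s q r π m X' n (insert (pick3 π m _ hZ) acc) := by
  simp only [run3]
  rw [if_neg hq, dif_pos hZ]

private lemma run3_subset (n : ℕ) : ∀ acc : Finset Ctr3, acc ⊆ run3 s q r π m X' n acc := by
  induction n with
  | zero => intro acc; simp [run3]
  | succ n ih =>
    intro acc
    simp only [run3]
    split_ifs with h1 h2
    · exact Finset.Subset.refl _
    · exact (Finset.subset_insert _ _).trans (ih _)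
    · exact Finset.Subset.refl _

private lemma lex3_le {a b c d e f : ℕ}
    (h : a < d ∨ (a = d ∧ (b < e ∨ (b = e ∧ c ≤ f)))) :
    (toLex (a, toLex (b, c)) : ℕ ×ₗ (ℕ ×ₗ ℕ)) ≤ toLex (d, toLex (e, f)) := by
  rw [Prod.Lex.le_iff]
  rcases h with h | ⟨rfl, h⟩
  · exact Or.inl h
  · refine Or.inr ⟨rfl, ?_⟩
    show (toLex (b, c) : ℕ ×ₗ ℕ) ≤ toLex (e, f)
    rw [Prod.Lex.le_iff]
    rcases h with h | ⟨rfl, h⟩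
    · exact Or.inl h
    · exact Or.inr ⟨rfl, h⟩

private lemma pick3_eq (Z : Finset Ctr3) (h : Z.Nonempty)
    (x₀ : Ctr3) (hx : x₀ ∈ Z) (hm : x₀.2.1 = m)
    (hmin : ∀ z ∈ Z, (toLex (π x₀.1, toLex (x₀.2.2, x₀.1)) : ℕ ×ₗ (ℕ ×ₗ ℕ))
      ≤ toLex (π z.1, toLex (z.2.2, z.1))) :
    pick3 π m Z h = x₀ := by
  have hk : (Z.image fun x => toLex ((π x.1 : ℕ), toLex (x.2.2, x.1))).min'
      (h.image _) = toLex ((π x₀.1 : ℕ), toLex (x₀.2.2, x₀.1)) :=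
    le_antisymm (Finset.min'_le _ _ (Finset.mem_image_of_mem _ hx))
      (Finset.le_min' _ _ _ (by
        rintro y hy
        obtain ⟨z, hz, rfl⟩ := Finset.mem_image.mp hy
        exact hmin z hz))
  unfold pick3
  rw [hk]
  simp only [ofLex_toLex]
  exact Prod.ext rfl (Prod.ext hm.symm rfl)

private lemma pick3_mem (Z : Finset Ctr3) (h : Z.Nonempty)
    (hZ : ∀ z ∈ Z, z.2.1 = m) : pick3 π m Z h ∈ Z := by
  obtain ⟨z, hz, hzk⟩ := Finset.mem_image.mp
    (Finset.min'_mem (Z.image fun x => toLex ((π x.1 : ℕ), toLex (x.2.2, x.1))) (h.image _))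
  unfold pick3
  rw [← hzk]
  simp only [ofLex_toLex]
  rw [← hZ z hz]
  exact hz

private lemma run3_cap_block (x : Ctr3) (hr : r x.2.2 ≤ 1) :
    ∀ (n : ℕ) (acc : Finset Ctr3), (∃ z ∈ acc, z.2.2 = x.2.2) →
      x ∈ run3 s q r π m X' n acc → x ∈ acc := by
  intro n
  induction n with
  | zero => intro acc _ hx; rwa [run3_zero] at hx
  | succ n ih =>
    intro acc hz hx
    obtain ⟨z, hzacc, hzw⟩ := hz
    simp only [run3] at hx
    split_ifs at hx with h1 h2
    · exact hx
    · have hx' := ih _ ⟨z, Finset.mem_insert_of_mem hzacc, hzw⟩ hx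
      rcases Finset.mem_insert.mp hx' with h | h
      · exfalso
        have hp := pick3_mem π m _ h2 (fun w hw => (Finset.mem_filter.mp hw).2.1)
        rw [← h] at hp
        have hcard := (Finset.mem_filter.mp hp).2.2.1
        have : 0 < (acc.filter fun y => y.2.2 = x.2.2).card :=
          Finset.card_pos.mpr ⟨z, Finset.mem_filter.mpr ⟨hzacc, hzw⟩⟩
        omega
      · exact h
    · exact hx

private lemma run3_none (n : ℕ) (acc : Finset Ctr3)
    (hZ : ¬ (X'.filter fun x => x.2.1 = m ∧
      (acc.filter fun y => y.2.2 = x.2.2).card < r x.2.2 ∧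
      ∀ y ∈ acc, y.1 ≠ x.1).Nonempty) :
    run3 s q r π m X' (n+1) acc = acc := by
  simp only [run3]
  rw [dif_neg hZ]
  split_ifs <;> rfl

private lemma chat_step1 (p : Ctr3)
    (hq : 0 < q) (hp : p ∈ X') (hpm : p.2.1 = m) (hpr : 0 < r p.2.2)
    (hpmin : ∀ z ∈ X', z.2.1 = m →
      (toLex (π p.1, toLex (p.2.2, p.1)) : ℕ ×ₗ (ℕ ×ₗ ℕ))
        ≤ toLex (π z.1, toLex (z.2.2, z.1))) :
    Chat3 s q r π m X' = run3 s q r π m X' X'.card (insert p ∅) := by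
  have hxZ : p ∈ X'.filter fun x => x.2.1 = m ∧
      ((∅ : Finset Ctr3).filter fun y => y.2.2 = x.2.2).card < r x.2.2 ∧
      ∀ y ∈ (∅ : Finset Ctr3), y.1 ≠ x.1 := by
    rw [Finset.mem_filter]
    exact ⟨hp, hpm, by simpa using hpr, by simp⟩
  have hZ : (X'.filter fun x => x.2.1 = m ∧
      ((∅ : Finset Ctr3).filter fun y => y.2.2 = x.2.2).card < r x.2.2 ∧
      ∀ y ∈ (∅ : Finset Ctr3), y.1 ≠ x.1).Nonempty := ⟨p, hxZ⟩
  show run3 s q r π m X' (X'.card + 1) ∅ = _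
  rw [run3_step s q r π m X' _ ∅ (by simp; omega) hZ,
    pick3_eq π m _ hZ p hxZ hpm (fun z hz => hpmin z (Finset.mem_filter.mp hz).1
      (Finset.mem_filter.mp hz).2.1)]

private lemma chat_one (p : Ctr3)
    (hq : 0 < q) (hp : p ∈ X') (hpm : p.2.1 = m) (hpr : 0 < r p.2.2)
    (hpmin : ∀ z ∈ X', z.2.1 = m →
      (toLex (π p.1, toLex (p.2.2, p.1)) : ℕ ×ₗ (ℕ ×ₗ ℕ))
        ≤ toLex (π z.1, toLex (z.2.2, z.1)))
    (hstop : q ≤ s p.1) :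
    Chat3 s q r π m X' = insert p ∅ := by
  rw [chat_step1 s q r π m X' p hq hp hpm hpr hpmin]
  exact run3_of_le s q r π m X' _ _ (by simpa using hstop)

private lemma chat_two_s15 (p x₁ : Ctr3)
    (hq : 0 < q) (hp : p ∈ X') (hpm : p.2.1 = m) (hpr : 0 < r p.2.2)
    (hpmin : ∀ z ∈ X', z.2.1 = m →
      (toLex (π p.1, toLex (p.2.2, p.1)) : ℕ ×ₗ (ℕ ×ₗ ℕ))
        ≤ toLex (π z.1, toLex (z.2.2, z.1)))
    (hq1 : ¬ q ≤ s p.1)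
    (hx : x₁ ∈ X') (hm : x₁.2.1 = m) (hne : x₁.1 ≠ p.1)
    (hcap : ((insert p (∅ : Finset Ctr3)).filter fun y => y.2.2 = x₁.2.2).card < r x₁.2.2)
    (hmin2 : ∀ z ∈ X', z.2.1 = m → p.1 ≠ z.1 →
      (toLex (π x₁.1, toLex (x₁.2.2, x₁.1)) : ℕ ×ₗ (ℕ ×ₗ ℕ))
        ≤ toLex (π z.1, toLex (z.2.2, z.1)))
    (hstop : q ≤ s x₁.1 + s p.1) :
    Chat3 s q r π m X' = insert x₁ (insert p ∅) := by
  rw [chat_step1 s q r π m X' p hq hp hpm hpr hpmin]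
  have hcard : X'.card = (X'.card - 1) + 1 :=
    (Nat.succ_pred_eq_of_pos (Finset.card_pos.mpr ⟨p, hp⟩)).symm
  rw [hcard]
  have hsum : ¬ q ≤ (insert p (∅ : Finset Ctr3)).sum (fun x => s x.1) := by
    simpa using hq1
  have hx₁Z : x₁ ∈ X'.filter fun x => x.2.1 = m ∧
      ((insert p (∅ : Finset Ctr3)).filter fun y => y.2.2 = x.2.2).card < r x.2.2 ∧
      ∀ y ∈ (insert p (∅ : Finset Ctr3)), y.1 ≠ x.1 := by
    rw [Finset.mem_filter]
    refine ⟨hx, hm, hcap, ?_⟩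
    intro y hy
    rcases Finset.mem_insert.mp hy with rfl | hy'
    · exact fun h => hne h.symm
    · simp at hy'
  have hZ2 : (X'.filter fun x => x.2.1 = m ∧
      ((insert p (∅ : Finset Ctr3)).filter fun y => y.2.2 = x.2.2).card < r x.2.2 ∧
      ∀ y ∈ (insert p (∅ : Finset Ctr3)), y.1 ≠ x.1).Nonempty := ⟨x₁, hx₁Z⟩
  rw [run3_step s q r π m X' _ _ hsum hZ2,
    pick3_eq π m _ hZ2 x₁ hx₁Z hm (fun z hz => by
      have h' := Finset.mem_filter.mp hz
      exact hmin2 z h'.1 h'.2.1 (h'.2.2.2 p (Finset.mem_insert_self _ _)))]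
  refine run3_of_le s q r π m X' _ _ ?_
  have hne' : x₁ ∉ insert p (∅ : Finset Ctr3) := by
    simp only [Finset.mem_insert, Finset.notMem_empty, or_false]
    intro h; exact hne (by rw [h])
  rw [Finset.sum_insert hne']
  simpa using hstop

private lemma chat_first (x₀ : Ctr3)
    (hq : 0 < q) (hx : x₀ ∈ X') (hm : x₀.2.1 = m) (hr : 0 < r x₀.2.2)
    (hmin : ∀ z ∈ X', z.2.1 = m →
      (toLex (π x₀.1, toLex (x₀.2.2, x₀.1)) : ℕ ×ₗ (ℕ ×ₗ ℕ))
        ≤ toLex (π z.1, toLex (z.2.2, z.1))) :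
    x₀ ∈ Chat3 s q r π m X' := by
  rw [chat_step1 s q r π m X' x₀ hq hx hm hr hmin]
  exact run3_subset s q r π m X' _ _ (Finset.mem_insert_self x₀ _)

private lemma chat_second (p x₀ : Ctr3)
    (hq : 0 < q) (hp : p ∈ X') (hpm : p.2.1 = m) (hpr : 0 < r p.2.2)
    (hpmin : ∀ z ∈ X', z.2.1 = m →
      (toLex (π p.1, toLex (p.2.2, p.1)) : ℕ ×ₗ (ℕ ×ₗ ℕ))
        ≤ toLex (π z.1, toLex (z.2.2, z.1)))
    (hq1 : ¬ q ≤ s p.1)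
    (hx : x₀ ∈ X') (hm : x₀.2.1 = m) (hne : x₀.1 ≠ p.1)
    (hcap : ((insert p (∅ : Finset Ctr3)).filter fun y => y.2.2 = x₀.2.2).card < r x₀.2.2)
    (hmin2 : ∀ z ∈ X', z.2.1 = m → p.1 ≠ z.1 →
      (toLex (π x₀.1, toLex (x₀.2.2, x₀.1)) : ℕ ×ₗ (ℕ ×ₗ ℕ))
        ≤ toLex (π z.1, toLex (z.2.2, z.1))) :
    x₀ ∈ Chat3 s q r π m X' := by
  rw [chat_step1 s q r π m X' p hq hp hpm hpr hpmin]
  have hcard : X'.card = (X'.card - 1) + 1 :=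
    (Nat.succ_pred_eq_of_pos (Finset.card_pos.mpr ⟨p, hp⟩)).symm
  rw [hcard]
  have hsum : ¬ q ≤ (insert p (∅ : Finset Ctr3)).sum (fun x => s x.1) := by
    simpa using hq1
  have hx₀Z : x₀ ∈ X'.filter fun x => x.2.1 = m ∧
      ((insert p (∅ : Finset Ctr3)).filter fun y => y.2.2 = x.2.2).card < r x.2.2 ∧
      ∀ y ∈ (insert p (∅ : Finset Ctr3)), y.1 ≠ x.1 := by
    rw [Finset.mem_filter]
    refine ⟨hx, hm, hcap, ?_⟩
    intro y hy
    rcases Finset.mem_insert.mp hy with rfl | hy'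
    · exact fun h => hne h.symm
    · simp at hy'
  have hZ2 : (X'.filter fun x => x.2.1 = m ∧
      ((insert p (∅ : Finset Ctr3)).filter fun y => y.2.2 = x.2.2).card < r x.2.2 ∧
      ∀ y ∈ (insert p (∅ : Finset Ctr3)), y.1 ≠ x.1).Nonempty := ⟨x₀, hx₀Z⟩
  rw [run3_step s q r π m X' _ _ hsum hZ2,
    pick3_eq π m _ hZ2 x₀ hx₀Z hm (fun z hz => by
      have h' := Finset.mem_filter.mp hz
      exact hmin2 z h'.1 h'.2.1 (h'.2.2.2 p (Finset.mem_insert_self _ _)))]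
  exact run3_subset s q r π m X' _ _ (Finset.mem_insert_self x₀ _)

private lemma chat_q1 (hs : ∀ a, 0 < s a)
    (x y : Ctr3) (hx : x ∈ Chat3 s 1 r π m X')
    (hy : y ∈ Chat3 s 1 r π m X') : x = y := by
  unfold Chat3 at hx hy
  by_cases hZ : (X'.filter fun x => x.2.1 = m ∧
      ((∅ : Finset Ctr3).filter fun y => y.2.2 = x.2.2).card < r x.2.2 ∧
      ∀ y ∈ (∅ : Finset Ctr3), y.1 ≠ x.1).Nonempty
  · rw [run3_step s 1 r π m X' _ ∅ (by simp) hZ,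
      run3_of_le s 1 r π m X' _ _ (by simp [Nat.one_le_iff_ne_zero, (hs _).ne'])] at hx hy
    rw [Finset.mem_insert] at hx hy
    simp only [Finset.notMem_empty, or_false] at hx hy
    rw [hx, hy]
  · rw [run3_none s 1 r π m X' _ ∅ hZ] at hx
    simp at hx

end Helpers

/-- Example 6: with burden-sizes `s(a₁) ≤ s(a₃) < s(a₂)`,
the quotas, capacities, priorities of Example 6, and preferences
`a₁ : (m₂,w_l) − (m₁,w_l) − …`, `a₂ : (m₁,w_l) − (m₃,w_l) − …`,
`a₃ : (m₁,w_h) − (m₂,w_h) − …` (where `pref a` ranks `a`'s contracts, lower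
value = better), no stable allocation exists. -/
theorem no_stable_allocation (s : ℕ → ℕ) (hpos : ∀ a, 0 < s a)
    (h02 : s 0 ≤ s 2) (h21 : s 2 < s 1)
    (pref : ℕ → Ctr3 → ℕ) (hinj : ∀ a, Function.Injective (pref a))
    (h1 : ∀ z : Ctr3, z.1 = 0 → z ≠ (0, 1, 0) →
      pref 0 (0, 1, 0) < pref 0 z)
    (h1' : ∀ z : Ctr3, z.1 = 0 → z ≠ (0, 1, 0) → z ≠ (0, 0, 0) →
      pref 0 (0, 0, 0) < pref 0 z)
    (h2 : ∀ z : Ctr3, z.1 = 1 → z ≠ (1, 0, 0) →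
      pref 1 (1, 0, 0) < pref 1 z)
    (h2' : ∀ z : Ctr3, z.1 = 1 → z ≠ (1, 0, 0) → z ≠ (1, 2, 0) →
      pref 1 (1, 2, 0) < pref 1 z)
    (h3 : ∀ z : Ctr3, z.1 = 2 → z ≠ (2, 0, 2) →
      pref 2 (2, 0, 2) < pref 2 z)
    (h3' : ∀ z : Ctr3, z.1 = 2 → z ≠ (2, 0, 2) → z ≠ (2, 1, 2) →
      pref 2 (2, 1, 2) < pref 2 z) :
    ¬ ∃ Y : Finset Ctr3, Alloc15 Y ∧ Stable15 s pref Y := by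
  rintro ⟨Y, hA, hS⟩
  obtain ⟨hbound, huniqc, -⟩ := hA
  obtain ⟨hch, hblock⟩ := hS
  have huniq : ∀ z ∈ Y, ∀ z' ∈ Y, z.1 = z'.1 → z = z' := fun z hz z' hz' h =>
    Finset.card_le_one.mp (huniqc z.1) z (Finset.mem_filter.mpr ⟨hz, rfl⟩)
      z' (Finset.mem_filter.mpr ⟨hz', h.symm⟩)
  have hrpos : ∀ m w, 0 < r15 m w := by
    intro m w; simp only [r15]; split_ifs <;> norm_num
  have hs01 : s 0 < s 1 := lt_of_le_of_lt h02 h21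
  have hq0pos : 0 < q15 s 0 := hpos 1
  by_cases h10 : ((1:ℕ), (0:ℕ), (0:ℕ)) ∈ Y
  · -- Case I : (1,0,0) ∈ Y
    have h00 : ((0:ℕ), (0:ℕ), (0:ℕ)) ∉ Y := by
      intro h00
      have hmemC : ((1:ℕ), (0:ℕ), (0:ℕ)) ∈ Chat3 s (q15 s 0) (r15 0) (π15 0) 0 Y := by
        rw [hch 0]; exact Finset.mem_filter.mpr ⟨h10, rfl⟩
      rw [chat_step1 s (q15 s 0) (r15 0) (π15 0) 0 Y (0,0,0) hq0pos h00 rfl (hrpos 0 0)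
        (by
          intro v hvY hvm
          have hv3 := (hbound v hvY).1
          rcases show v.1 = 0 ∨ v.1 = 1 ∨ v.1 = 2 by omega with h | h | h
          · exact le_of_eq (by rw [huniq v hvY _ h00 h])
          · exact lex3_le (by simp only [π15, reduceIte, Nat.reduceEqDiff]; omega)
          · exact lex3_le (by simp only [π15, reduceIte, Nat.reduceEqDiff]; omega))] at hmemC
      have := run3_cap_block s (q15 s 0) (r15 0) (π15 0) 0 Y (1,0,0)
        (by norm_num [r15]) _ _ ⟨(0,0,0), Finset.mem_insert_self _ _, rfl⟩ hmemC
      simp at this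
    have hno2m1 : ∀ v ∈ Y, v.2.1 = 0 → v.1 ≠ 2 := by
      intro v hvY hvm hv2
      have hmemC : v ∈ Chat3 s (q15 s 0) (r15 0) (π15 0) 0 Y := by
        rw [hch 0]; exact Finset.mem_filter.mpr ⟨hvY, hvm⟩
      by_cases ha0 : ∃ u ∈ Y, u.1 = 0 ∧ u.2.1 = 0
      · obtain ⟨u, huY, hu1, hum⟩ := ha0
        have huw : u.2.2 ≠ 0 := by
          intro hw
          apply h00
          have hu : u = (0,0,0) := by
            obtain ⟨a, b, c⟩ := u
            simp only at hu1 hum hw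
            rw [hu1, hum, hw]
          rwa [hu] at huY
        rw [chat_two_s15 s (q15 s 0) (r15 0) (π15 0) 0 Y u (1,0,0) hq0pos huY hum (hrpos 0 _)
            (by
              intro w hwY hwm
              have hw3 := (hbound w hwY).1
              rcases show w.1 = 0 ∨ w.1 = 1 ∨ w.1 = 2 by omega with h | h | h
              · exact le_of_eq (by rw [huniq w hwY u huY (by omega)])
              · exact lex3_le (by simp only [π15, reduceIte, Nat.reduceEqDiff]; omega)
              · exact lex3_le (by simp only [π15, reduceIte, Nat.reduceEqDiff]; omega))
            (by rw [hu1]; exact Nat.not_le.mpr hs01)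
            h10 rfl (by simp [hu1])
            (by
              rw [Finset.filter_insert, if_neg huw]
              simpa using hrpos 0 0)
            (by
              intro w hwY hwm hwne
              have hw3 := (hbound w hwY).1
              rcases show w.1 = 0 ∨ w.1 = 1 ∨ w.1 = 2 by omega with h | h | h
              · exact absurd (show u.1 = w.1 by omega) hwne
              · exact le_of_eq (by rw [huniq w hwY _ h10 h])
              · exact lex3_le (by simp only [π15, reduceIte, Nat.reduceEqDiff]; omega))
            (Nat.le_add_right _ _)] at hmemC
        simp only [Finset.mem_insert, Finset.notMem_empty, or_false] at hmemC
        rcases hmemC with h | h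
        · rw [h] at hv2; simp at hv2
        · rw [h] at hv2; omega
      · push_neg at ha0
        rw [chat_one s (q15 s 0) (r15 0) (π15 0) 0 Y (1,0,0) hq0pos h10 rfl (hrpos 0 0)
            (by
              intro w hwY hwm
              have hw3 := (hbound w hwY).1
              rcases show w.1 = 0 ∨ w.1 = 1 ∨ w.1 = 2 by omega with h | h | h
              · exact absurd hwm (ha0 w hwY h)
              · exact le_of_eq (by rw [huniq w hwY _ h10 h])
              · exact lex3_le (by simp only [π15, reduceIte, Nat.reduceEqDiff]; omega))
            (le_refl _)] at hmemC
        simp only [Finset.mem_insert, Finset.notMem_empty, or_false] at hmemC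
        rw [hmemC] at hv2; simp at hv2
    by_cases h010 : ((0:ℕ), (1:ℕ), (0:ℕ)) ∈ Y
    · -- Case I.a : a₁ is assigned (m₂, w_l); blocking pair (2,1,2)
      have hm2sing : ∀ v ∈ Y, v.2.1 = 1 → v = (0,1,0) := by
        intro v hvY hvm
        refine chat_q1 s (r15 1) (π15 1) 1 Y hpos v (0,1,0) ?_ ?_
        · have hv : v ∈ Chat3 s (q15 s 1) (r15 1) (π15 1) 1 Y := by
            rw [hch 1]; exact Finset.mem_filter.mpr ⟨hvY, hvm⟩
          exact hv
        · have hv : ((0:ℕ),(1:ℕ),(0:ℕ)) ∈ Chat3 s (q15 s 1) (r15 1) (π15 1) 1 Y := by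
            rw [hch 1]; exact Finset.mem_filter.mpr ⟨h010, rfl⟩
          exact hv
      have h212 : ((2:ℕ),(1:ℕ),(2:ℕ)) ∉ Y := by
        intro hmem
        have := hm2sing _ hmem rfl
        simp at this
      refine hblock (2,1,2) (by norm_num) (by norm_num) (by norm_num) h212 ?_ ?_
      · intro y hy hy1
        refine h3' y hy1 ?_ (fun he => h212 (he ▸ hy))
        intro he
        rw [he] at hy
        exact hno2m1 _ hy rfl rfl
      · refine chat_first s (q15 s 1) (r15 1) (π15 1) 1 _ (2,1,2) Nat.one_pos
          (Finset.mem_insert_self _ _) rfl (hrpos 1 2) ?_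
        intro v hv hvm
        rcases Finset.mem_insert.mp hv with rfl | hvY
        · exact le_refl _
        · rw [hm2sing v hvY hvm]
          exact lex3_le (by simp only [π15, reduceIte, Nat.reduceEqDiff]; omega)
    · -- Case I.b : blocking pair (0,0,0)
      refine hblock (0,0,0) (by norm_num) (by norm_num) (by norm_num) h00 ?_ ?_
      · intro y hy hy1
        exact h1' y hy1 (fun he => h010 (he ▸ hy)) (fun he => h00 (he ▸ hy))
      · refine chat_first s (q15 s 0) (r15 0) (π15 0) 0 _ (0,0,0) hq0pos
          (Finset.mem_insert_self _ _) rfl (hrpos 0 0) ?_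
        intro v hv hvm
        rcases Finset.mem_insert.mp hv with rfl | hvY
        · exact le_refl _
        · exact lex3_le (by simp only [π15, reduceIte, Nat.reduceEqDiff]; omega)
  · by_cases h00 : ((0:ℕ),(0:ℕ),(0:ℕ)) ∈ Y
    · -- Case II : (1,0,0) ∉ Y, (0,0,0) ∈ Y
      have hF1 : ∃ z ∈ Y, z.2.1 = 1 ∧ z.1 ≠ 0 := by
        by_contra hno
        push_neg at hno
        have h010 : ((0:ℕ),(1:ℕ),(0:ℕ)) ∉ Y := by
          intro hmem
          have := huniq _ hmem _ h00 rfl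
          simp at this
        refine hblock (0,1,0) (by norm_num) (by norm_num) (by norm_num) h010
          (fun y hy hy1 => h1 y hy1 (fun he => h010 (he ▸ hy))) ?_
        refine chat_first s (q15 s 1) (r15 1) (π15 1) 1 _ (0,1,0) Nat.one_pos
          (Finset.mem_insert_self _ _) rfl (hrpos 1 0) ?_
        intro v hv hvm
        rcases Finset.mem_insert.mp hv with rfl | hvY
        · exact le_refl _
        · exfalso
          have hv0 : v.1 = 0 := hno v hvY hvm
          have := huniq v hvY _ h00 hv0
          rw [this] at hvm
          simp at hvm
      obtain ⟨z, hzY, hzm2, hza0⟩ := hF1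
      have hz3 := (hbound z hzY).1
      rcases show z.1 = 1 ∨ z.1 = 2 by omega with hz1 | hz2
      · -- Case II.a : a₂ assigned at m₂; blocking pair (1,2,0)
        have h120 : ((1:ℕ),(2:ℕ),(0:ℕ)) ∉ Y := by
          intro hmem
          have := huniq _ hmem z hzY (by omega)
          rw [← this] at hzm2
          simp at hzm2
        refine hblock (1,2,0) (by norm_num) (by norm_num) (by norm_num) h120 ?_ ?_
        · intro y hy hy1
          exact h2' y hy1 (fun he => h10 (he ▸ hy)) (fun he => h120 (he ▸ hy))
        · refine chat_first s (q15 s 2) (r15 2) (π15 2) 2 _ (1,2,0) Nat.one_pos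
            (Finset.mem_insert_self _ _) rfl (hrpos 2 0) ?_
          intro v hv hvm
          rcases Finset.mem_insert.mp hv with rfl | hvY
          · exact le_refl _
          · have hv3 := (hbound v hvY).1
            rcases show v.1 = 0 ∨ v.1 = 1 ∨ v.1 = 2 by omega with h | h | h
            · exfalso
              have := huniq v hvY _ h00 h
              rw [this] at hvm; simp at hvm
            · exfalso
              have := huniq v hvY z hzY (by omega)
              rw [this] at hvm; omega
            · exact lex3_le (by simp only [π15, reduceIte, Nat.reduceEqDiff]; omega)
      · -- Case II.b : a₃ assigned at m₂
        have hm2sing : ∀ v ∈ Y, v.2.1 = 1 → v = z := by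
          intro v hvY hvm
          refine chat_q1 s (r15 1) (π15 1) 1 Y hpos v z ?_ ?_
          · have hv : v ∈ Chat3 s (q15 s 1) (r15 1) (π15 1) 1 Y := by
              rw [hch 1]; exact Finset.mem_filter.mpr ⟨hvY, hvm⟩
            exact hv
          · have hv : z ∈ Chat3 s (q15 s 1) (r15 1) (π15 1) 1 Y := by
              rw [hch 1]; exact Finset.mem_filter.mpr ⟨hzY, hzm2⟩
            exact hv
        by_cases hb : ∃ u ∈ Y, u.1 = 1 ∧ u.2.1 = 0
        · obtain ⟨u, huY, hu1, hum⟩ := hb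
          have h120 : ((1:ℕ),(2:ℕ),(0:ℕ)) ∉ Y := by
            intro hmem
            have := huniq _ hmem u huY (by omega)
            rw [← this] at hum; simp at hum
          refine hblock (1,2,0) (by norm_num) (by norm_num) (by norm_num) h120 ?_ ?_
          · intro y hy hy1
            exact h2' y hy1 (fun he => h10 (he ▸ hy)) (fun he => h120 (he ▸ hy))
          · refine chat_first s (q15 s 2) (r15 2) (π15 2) 2 _ (1,2,0) Nat.one_pos
              (Finset.mem_insert_self _ _) rfl (hrpos 2 0) ?_
            intro v hv hvm
            rcases Finset.mem_insert.mp hv with rfl | hvY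
            · exact le_refl _
            · have hv3 := (hbound v hvY).1
              rcases show v.1 = 0 ∨ v.1 = 1 ∨ v.1 = 2 by omega with h | h | h
              · exfalso; have := huniq v hvY _ h00 h; rw [this] at hvm; simp at hvm
              · exfalso; have := huniq v hvY u huY (by omega); rw [this] at hvm; omega
              · exfalso; have := huniq v hvY z hzY (by omega); rw [this] at hvm; omega
        · push_neg at hb
          have h202 : ((2:ℕ),(0:ℕ),(2:ℕ)) ∉ Y := by
            intro hmem
            have := huniq _ hmem z hzY (by omega)
            rw [← this] at hzm2; simp at hzm2
          refine hblock (2,0,2) (by norm_num) (by norm_num) (by norm_num) h202 ?_ ?_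
          · intro y hy hy1
            exact h3 y hy1 (fun he => h202 (he ▸ hy))
          · refine chat_second s (q15 s 0) (r15 0) (π15 0) 0 _ (0,0,0) (2,0,2) hq0pos
              (Finset.mem_insert_of_mem h00) rfl (hrpos 0 0) ?_ (Nat.not_le.mpr hs01)
              (Finset.mem_insert_self _ _) rfl (by decide) ?_ ?_
            · intro v hv hvm
              rcases Finset.mem_insert.mp hv with rfl | hvY
              · exact lex3_le (by simp only [π15, reduceIte, Nat.reduceEqDiff]; omega)
              · have hv3 := (hbound v hvY).1
                rcases show v.1 = 0 ∨ v.1 = 1 ∨ v.1 = 2 by omega with h | h | h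
                · exact le_of_eq (by rw [huniq v hvY _ h00 h])
                · exact lex3_le (by simp only [π15, reduceIte, Nat.reduceEqDiff]; omega)
                · exact lex3_le (by simp only [π15, reduceIte, Nat.reduceEqDiff]; omega)
            · rw [Finset.filter_insert, if_neg (by decide)]
              simpa using hrpos 0 2
            · intro v hv hvm hvne
              rcases Finset.mem_insert.mp hv with rfl | hvY
              · exact le_refl _
              · have hv3 := (hbound v hvY).1
                rcases show v.1 = 0 ∨ v.1 = 1 ∨ v.1 = 2 by omega with h | h | h
                · exact absurd (show ((0:ℕ),(0:ℕ),(0:ℕ)).1 = v.1 by omega) hvne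
                · exact absurd hvm (hb v hvY h)
                · exfalso
                  have := huniq v hvY z hzY (by omega)
                  rw [this] at hvm; omega
    · -- Case III : neither (1,0,0) nor (0,0,0) in Y; blocking pair (1,0,0)
      refine hblock (1,0,0) (by norm_num) (by norm_num) (by norm_num) h10
        (fun y hy hy1 => h2 y hy1 (fun he => h10 (he ▸ hy))) ?_
      by_cases ha0 : ∃ u ∈ Y, u.1 = 0 ∧ u.2.1 = 0
      · obtain ⟨u, huY, hu1, hum⟩ := ha0
        have huw : u.2.2 ≠ 0 := by
          intro hw
          apply h00
          have hu : u = (0,0,0) := by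
            obtain ⟨a, b, c⟩ := u
            simp only at hu1 hum hw
            rw [hu1, hum, hw]
          rwa [hu] at huY
        refine chat_second s (q15 s 0) (r15 0) (π15 0) 0 _ u (1,0,0) hq0pos
          (Finset.mem_insert_of_mem huY) hum (hrpos 0 _) ?_
          (by rw [hu1]; exact Nat.not_le.mpr hs01)
          (Finset.mem_insert_self _ _) rfl (by simp [hu1]) ?_ ?_
        · intro v hv hvm
          rcases Finset.mem_insert.mp hv with rfl | hvY
          · exact lex3_le (by simp only [π15, reduceIte, Nat.reduceEqDiff]; omega)
          · have hv3 := (hbound v hvY).1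
            rcases show v.1 = 0 ∨ v.1 = 1 ∨ v.1 = 2 by omega with h | h | h
            · exact le_of_eq (by rw [huniq v hvY u huY (by omega)])
            · exact lex3_le (by simp only [π15, reduceIte, Nat.reduceEqDiff]; omega)
            · exact lex3_le (by simp only [π15, reduceIte, Nat.reduceEqDiff]; omega)
        · rw [Finset.filter_insert, if_neg huw]
          simpa using hrpos 0 0
        · intro v hv hvm hvne
          rcases Finset.mem_insert.mp hv with rfl | hvY
          · exact le_refl _
          · have hv3 := (hbound v hvY).1
            rcases show v.1 = 0 ∨ v.1 = 1 ∨ v.1 = 2 by omega with h | h | h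
            · exact absurd (show u.1 = v.1 by omega) hvne
            · exact lex3_le (by simp only [π15, reduceIte, Nat.reduceEqDiff]; omega)
            · exact lex3_le (by simp only [π15, reduceIte, Nat.reduceEqDiff]; omega)
      · push_neg at ha0
        refine chat_first s (q15 s 0) (r15 0) (π15 0) 0 _ (1,0,0) hq0pos
          (Finset.mem_insert_self _ _) rfl (hrpos 0 0) ?_
        intro v hv hvm
        rcases Finset.mem_insert.mp hv with rfl | hvY
        · exact le_refl _
        · have hv3 := (hbound v hvY).1
          rcases show v.1 = 0 ∨ v.1 = 1 ∨ v.1 = 2 by omega with h | h | h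
          · exact absurd hvm (ha0 v hvY h)
          · exact lex3_le (by simp only [π15, reduceIte, Nat.reduceEqDiff]; omega)
          · exact lex3_le (by simp only [π15, reduceIte, Nat.reduceEqDiff]; omega)
end
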